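/- arXiv:0901.3079 — 3 statements merged into one kernel-verified Lean document; each statement's English description precedes it below -/
import Mathlib

section
/- Let 0 ≤ q < 1, c₀ > 0, and let Σ = [σ_ij] be a p×p matrix with Σ_{j=1}^p |σ_ij|^q ≤ c₀ for all i. Then for any threshold t > 0, the thresholded matrix T_t(Σ) = [σ_ij 1(|σ_ij| ≥ t)] satisfies max_i Σ_{j=1}^p |σ_ij| 1(|σ_ij| < t) ≤ t^{1−q} c₀, hence for symmetric Σ the operator-norm bias satisfies ‖T_t(Σ) − Σ‖ ≤ t^{1−q} c₀. -/
open MeasureTheory ProbabilityTheory Matrix Filter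
open scoped ENNReal NNReal BigOperators

/-- Operator (spectral) norm of a real `p × p` matrix. -/
noncomputable def opNorm {p : ℕ} (A : Matrix (Fin p) (Fin p) ℝ) : ℝ :=
  ‖LinearMap.toContinuousLinearMap (Matrix.toEuclideanLin A)‖

/-- Hard thresholding at level `t`: `T_t(A)_ij = A_ij 1(|A_ij| ≥ t)`. -/
noncomputable def thresh {p : ℕ} (t : ℝ) (A : Matrix (Fin p) (Fin p) ℝ) : Matrix (Fin p) (Fin p) ℝ :=
  Matrix.of fun i j => if t ≤ |A i j| then A i j else 0

/-- `|x|^q`, with the convention `0^0 = 0` (so for `q = 0` this is the indicator of `x ≠ 0`). -/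
noncomputable def absPow (q x : ℝ) : ℝ := if x = 0 then 0 else |x| ^ q

/-- Schur test for symmetric real matrices: op norm bounded by max abs row sum. -/
lemma opNorm_le_rowsum {p : ℕ} (A : Matrix (Fin p) (Fin p) ℝ)
    (hA : ∀ i j, A i j = A j i) {R : ℝ} (hR : 0 ≤ R)
    (h : ∀ i, ∑ j, |A i j| ≤ R) : opNorm A ≤ R := by
  unfold opNorm
  apply ContinuousLinearMap.opNorm_le_bound _ hR
  intro x
  rw [LinearMap.coe_toContinuousLinearMap']
  have hxnorm : ‖x‖ = Real.sqrt (∑ j, (x j) ^ 2) := by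
    rw [EuclideanSpace.norm_eq]
    congr 1
    exact Finset.sum_congr rfl fun j _ => by rw [Real.norm_eq_abs, sq_abs]
  have hy : ∀ i, (Matrix.toEuclideanLin A x) i = ∑ j, A i j * x j := by
    intro i
    rw [Matrix.toEuclideanLin_apply]
    rfl
  have key : ∑ i, ((Matrix.toEuclideanLin A x) i) ^ 2 ≤ R ^ 2 * ∑ j, (x j) ^ 2 := by
    have step1 : ∀ i, ((Matrix.toEuclideanLin A x) i) ^ 2 ≤ R * ∑ j, |A i j| * (x j) ^ 2 := by
      intro i
      rw [hy i]
      have h1 : (∑ j, A i j * x j) ^ 2 ≤ (∑ j, |A i j| * |x j|) ^ 2 := by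
        rw [← sq_abs]
        apply pow_le_pow_left₀ (abs_nonneg _)
        calc |∑ j, A i j * x j| ≤ ∑ j, |A i j * x j| := Finset.abs_sum_le_sum_abs _ _
          _ = ∑ j, |A i j| * |x j| := by simp [abs_mul]
      have h2 : (∑ j, |A i j| * |x j|) ^ 2 ≤
          (∑ j, (Real.sqrt |A i j|) ^ 2) * (∑ j, (Real.sqrt |A i j| * |x j|) ^ 2) := by
        calc (∑ j, |A i j| * |x j|) ^ 2
            = (∑ j, Real.sqrt |A i j| * (Real.sqrt |A i j| * |x j|)) ^ 2 := by
              congr 1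
              exact Finset.sum_congr rfl fun j _ => by
                rw [← mul_assoc, Real.mul_self_sqrt (abs_nonneg _)]
          _ ≤ (∑ j, (Real.sqrt |A i j|) ^ 2) * (∑ j, (Real.sqrt |A i j| * |x j|) ^ 2) := by
              apply Finset.sum_mul_sq_le_sq_mul_sq
      have h3 : (∑ j, (Real.sqrt |A i j|) ^ 2) = ∑ j, |A i j| :=
        Finset.sum_congr rfl fun j _ => Real.sq_sqrt (abs_nonneg _)
      have h4 : (∑ j, (Real.sqrt |A i j| * |x j|) ^ 2) = ∑ j, |A i j| * (x j) ^ 2 :=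
        Finset.sum_congr rfl fun j _ => by
          rw [mul_pow, Real.sq_sqrt (abs_nonneg _), sq_abs]
      calc (∑ j, A i j * x j) ^ 2 ≤ (∑ j, |A i j| * |x j|) ^ 2 := h1
        _ ≤ (∑ j, |A i j|) * (∑ j, |A i j| * (x j) ^ 2) := by rw [← h3, ← h4]; exact h2
        _ ≤ R * ∑ j, |A i j| * (x j) ^ 2 := by
            apply mul_le_mul_of_nonneg_right (h i)
            exact Finset.sum_nonneg fun j _ => mul_nonneg (abs_nonneg _) (sq_nonneg _)
    calc ∑ i, ((Matrix.toEuclideanLin A x) i) ^ 2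
        ≤ ∑ i, R * ∑ j, |A i j| * (x j) ^ 2 := Finset.sum_le_sum fun i _ => step1 i
      _ = R * ∑ j, (∑ i, |A i j|) * (x j) ^ 2 := by
          rw [← Finset.mul_sum, Finset.sum_comm]
          congr 1
          exact Finset.sum_congr rfl fun j _ => by rw [Finset.sum_mul]
      _ ≤ R * ∑ j, R * (x j) ^ 2 := by
          apply mul_le_mul_of_nonneg_left _ hR
          apply Finset.sum_le_sum
          intro j _
          apply mul_le_mul_of_nonneg_right _ (sq_nonneg _)
          calc ∑ i, |A i j| = ∑ i, |A j i| :=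
                Finset.sum_congr rfl fun i _ => by rw [hA i j]
            _ ≤ R := h j
      _ = R ^ 2 * ∑ j, (x j) ^ 2 := by rw [← Finset.mul_sum, sq, mul_assoc]
  have hynorm : ‖Matrix.toEuclideanLin A x‖ = Real.sqrt (∑ i, ((Matrix.toEuclideanLin A x) i) ^ 2) := by
    rw [EuclideanSpace.norm_eq]
    congr 1
    exact Finset.sum_congr rfl fun i _ => by rw [Real.norm_eq_abs, sq_abs]
  rw [hynorm, hxnorm]
  calc Real.sqrt (∑ i, ((Matrix.toEuclideanLin A x) i) ^ 2)
      ≤ Real.sqrt (R ^ 2 * ∑ j, (x j) ^ 2) := Real.sqrt_le_sqrt key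
    _ = R * Real.sqrt (∑ j, (x j) ^ 2) := by
        rw [Real.sqrt_mul (sq_nonneg R), Real.sqrt_sq hR]

/-- If `∑_j |σ_ij|^q ≤ c₀` for all `i` with `0 ≤ q < 1`, then for any `t > 0` the thresholding
bias satisfies `max_i ∑_j |σ_ij| 1(|σ_ij| < t) ≤ t^{1−q} c₀`; hence for symmetric `Σ`,
`‖T_t(Σ) − Σ‖ ≤ t^{1−q} c₀` in operator norm. -/
theorem stmt4 {p : ℕ} (q c0 t : ℝ) (hq0 : 0 ≤ q) (hq1 : q < 1) (hc0 : 0 < c0) (ht : 0 < t)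
    (S : Matrix (Fin p) (Fin p) ℝ) (hU : ∀ i, ∑ j, absPow q (S i j) ≤ c0) :
    (∀ i, ∑ j, (if |S i j| < t then |S i j| else 0) ≤ t ^ (1 - q) * c0) ∧
      (S.IsHermitian → opNorm (thresh t S - S) ≤ t ^ (1 - q) * c0) := by
  have htq : (0:ℝ) ≤ t ^ (1 - q) := Real.rpow_nonneg ht.le _
  have hterm : ∀ x : ℝ, (if |x| < t then |x| else 0) ≤ t ^ (1 - q) * absPow q x := by
    intro x
    by_cases hx0 : x = 0
    · simp [hx0, absPow, ht.not_gt]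
    · unfold absPow
      rw [if_neg hx0]
      by_cases hxt : |x| < t
      · rw [if_pos hxt]
        have hxpos : 0 < |x| := abs_pos.mpr hx0
        have : |x| = |x| ^ (1 - q) * |x| ^ q := by
          rw [← Real.rpow_add hxpos]
          simp
        nth_rewrite 1 [this]
        apply mul_le_mul_of_nonneg_right _ (Real.rpow_nonneg (abs_nonneg _) _)
        exact Real.rpow_le_rpow (abs_nonneg _) hxt.le (by linarith)
      · rw [if_neg hxt]
        exact mul_nonneg htq (Real.rpow_nonneg (abs_nonneg _) _)
  have part1 : ∀ i, ∑ j, (if |S i j| < t then |S i j| else 0) ≤ t ^ (1 - q) * c0 := by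
    intro i
    calc ∑ j, (if |S i j| < t then |S i j| else 0)
        ≤ ∑ j, t ^ (1 - q) * absPow q (S i j) := Finset.sum_le_sum fun j _ => hterm _
      _ = t ^ (1 - q) * ∑ j, absPow q (S i j) := by rw [Finset.mul_sum]
      _ ≤ t ^ (1 - q) * c0 := mul_le_mul_of_nonneg_left (hU i) htq
  refine ⟨part1, fun hS => ?_⟩
  have hSsymm : ∀ i j, S i j = S j i := by
    intro i j
    have := hS.apply i j
    simpa using this.symm
  have habs : ∀ i j, |(thresh t S - S) i j| = (if |S i j| < t then |S i j| else 0) := by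
    intro i j
    simp only [Matrix.sub_apply, thresh, Matrix.of_apply]
    by_cases hxt : t ≤ |S i j|
    · rw [if_pos hxt, if_neg (not_lt.mpr hxt)]
      simp
    · rw [if_neg hxt, if_pos (not_le.mp hxt)]
      simp
  apply opNorm_le_rowsum
  · intro i j
    simp only [Matrix.sub_apply, thresh, Matrix.of_apply, hSsymm i j]
  · exact mul_nonneg htq hc0.le
  · intro i
    calc ∑ j, |(thresh t S - S) i j| = ∑ j, (if |S i j| < t then |S i j| else 0) :=
          Finset.sum_congr rfl fun j _ => habs i j
      _ ≤ t ^ (1 - q) * c0 := part1 i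
end

section
/- (Lemma A.1, first bound.) Let X = (X₁, …, X_p)ᵀ be a p-variate Gaussian vector with mean zero and covariance Σ ∈ U_τ(q, c₀, M), and let V = [v_ab] be a symmetric p×p matrix with Frobenius norm ‖V‖_F = 1. Then Var(Σ_{a,b} v_ab X_a X_b) = 2 Σ_{a,b,c,d} v_ab v_cd σ_ac σ_bd ≤ 2 M^{2−q} c₀ p; in particular Var(Σ_{a,b} v_ab X_a X_b) ≤ p C₁(q, c₀, M). -/
open MeasureTheory ProbabilityTheory Matrix Filter
open scoped ENNReal NNReal BigOperators

/-- Membership in the uniformity class `U_τ(q, c₀, M)`. -/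
def memUtau {p : ℕ} (q c0 M : ℝ) (S : Matrix (Fin p) (Fin p) ℝ) : Prop :=
  (∀ i, S i i ≤ M) ∧ ∀ i, ∑ j, absPow q (S i j) ≤ c0

/-- `X` is a `p`-variate Gaussian vector with mean `m` and covariance matrix `S`. -/
def IsGaussianVec {p : ℕ} {Ω : Type} [MeasurableSpace Ω] (μ : Measure Ω)
    (X : Ω → Fin p → ℝ) (m : Fin p → ℝ) (S : Matrix (Fin p) (Fin p) ℝ) : Prop :=
  Measurable X ∧ ∀ a : Fin p → ℝ,
    Measure.map (fun ω => ∑ i, a i * X ω i) μ =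
      gaussianReal (∑ i, a i * m i) (Real.toNNReal (∑ i, ∑ j, a i * S i j * a j))


namespace Stmt16Aux
open Real

lemma pow_abs_le_exp (x : ℝ) (n : ℕ) : |x| ^ n ≤ n.factorial * Real.exp |x| := by
  have h : |x| ^ n / n.factorial ≤ Real.exp |x| := by
    calc |x| ^ n / n.factorial ≤ ∑ i ∈ Finset.range (n+1), |x| ^ i / i.factorial := by
          exact Finset.single_le_sum (f := fun i => |x| ^ i / i.factorial)
            (fun i _ => by positivity) (Finset.self_mem_range_succ n)
      _ ≤ Real.exp |x| := Real.sum_le_exp_of_nonneg (abs_nonneg x) _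
  have hf : (0:ℝ) < n.factorial := by positivity
  calc |x| ^ n = n.factorial * (|x| ^ n / n.factorial) := by field_simp
    _ ≤ n.factorial * Real.exp |x| := by
        exact mul_le_mul_of_nonneg_left h (le_of_lt hf)

lemma gauss_bound {b : ℝ} (hb : 0 < b) (n : ℕ) (x : ℝ) :
    |x ^ n * Real.exp (-b * x ^ 2)| ≤
      (n.factorial * Real.exp (1/(2*b))) * Real.exp (-(b/2) * x ^ 2) := by
  rw [abs_mul, abs_pow, Real.abs_exp]
  calc |x| ^ n * Real.exp (-b * x ^ 2)
      ≤ (n.factorial * Real.exp |x|) * Real.exp (-b * x ^ 2) := by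
        exact mul_le_mul_of_nonneg_right (pow_abs_le_exp x n) (Real.exp_pos _).le
    _ = n.factorial * Real.exp (|x| - b * x ^ 2) := by rw [mul_assoc, ← Real.exp_add]; ring_nf
    _ ≤ n.factorial * Real.exp (1/(2*b) + (-(b/2) * x ^ 2)) := by
        apply mul_le_mul_of_nonneg_left _ (by positivity)
        apply Real.exp_le_exp.2
        have key : 2 * b * |x| ≤ b^2 * x^2 + 1 := by
          nlinarith [sq_nonneg (b * |x| - 1), sq_abs x]
        have key2 : |x| ≤ (b^2 * x^2 + 1) / (2*b) := by
          rw [le_div_iff₀ (by positivity)]; linarith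
        have key3 : (b^2 * x^2 + 1) / (2*b) = (b/2) * x^2 + 1/(2*b) := by
          field_simp
        rw [key3] at key2
        nlinarith [sq_nonneg x]
    _ = (n.factorial * Real.exp (1/(2*b))) * Real.exp (-(b/2) * x ^ 2) := by
        rw [Real.exp_add]; ring

lemma integrable_pow_mul_gauss {b : ℝ} (hb : 0 < b) (n : ℕ) :
    Integrable (fun x : ℝ => x ^ n * Real.exp (-b * x ^ 2)) := by
  apply Integrable.mono' (((integrable_exp_neg_mul_sq (half_pos hb)).const_mul
    (n.factorial * Real.exp (1/(2*b)))))
  · exact ((continuous_pow n).mul (by continuity)).aestronglyMeasurable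
  · exact Filter.Eventually.of_forall (fun x => by
      rw [Real.norm_eq_abs]; exact gauss_bound hb n x)

lemma tendsto_pow_mul_gauss {b : ℝ} (hb : 0 < b) (n : ℕ) (l : Filter ℝ)
    (habs : Tendsto (fun x : ℝ => |x|) l atTop) :
    Tendsto (fun x : ℝ => x ^ n * Real.exp (-b * x ^ 2)) l (nhds 0) := by
  apply squeeze_zero_norm (fun x => gauss_bound hb n x)
  have h1 : Tendsto (fun x : ℝ => -(b/2) * x ^ 2) l atBot := by
    have : Tendsto (fun x : ℝ => x ^ 2) l atTop := by
      have := (tendsto_pow_atTop (n := 2) (by norm_num)).comp habs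
      refine this.congr (fun x => by simp [sq_abs])
    exact Tendsto.const_mul_atTop_of_neg (by linarith) this
  have h2 : Tendsto (fun x : ℝ => Real.exp (-(b/2) * x ^ 2)) l (nhds 0) :=
    Real.tendsto_exp_atBot.comp h1
  simpa using h2.const_mul (n.factorial * Real.exp (1/(2*b)))


lemma integral_deriv_zero {f f' : ℝ → ℝ} (hd : ∀ x, HasDerivAt f (f' x) x)
    (hi : Integrable f') (ht : Tendsto f atTop (nhds 0))
    (hb : Tendsto f atBot (nhds 0)) : ∫ x, f' x = 0 := by
  have h1 : ∫ x in Set.Iic 0, f' x = f 0 - 0 :=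
    integral_Iic_of_hasDerivAt_of_tendsto (hd 0).continuousAt.continuousWithinAt
      (fun x _ => hd x) hi.integrableOn hb
  have h2 : ∫ x in Set.Ioi 0, f' x = 0 - f 0 :=
    integral_Ioi_of_hasDerivAt_of_tendsto (hd 0).continuousAt.continuousWithinAt
      (fun x _ => hd x) hi.integrableOn ht
  have h3 := integral_add_compl (measurableSet_Iic (a := (0:ℝ))) hi
  rw [Set.compl_Iic] at h3
  rw [← h3, h1, h2]; ring

lemma gauss_step {b : ℝ} (hb : 0 < b) (n : ℕ) :
    ∫ x : ℝ, x ^ (n+2) * Real.exp (-b * x ^ 2)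
      = ((n+1 : ℝ)/(2*b)) * ∫ x : ℝ, x ^ n * Real.exp (-b * x ^ 2) := by
  set c : ℝ := (n+1 : ℝ)/(2*b) with hc
  have hd : ∀ x : ℝ, HasDerivAt (fun x : ℝ => -(1/(2*b)) * (x ^ (n+1) * Real.exp (-b * x ^ 2)))
      (x ^ (n+2) * Real.exp (-b * x ^ 2) - c * (x ^ n * Real.exp (-b * x ^ 2))) x := by
    intro x
    have h1 : HasDerivAt (fun x : ℝ => x ^ (n+1)) ((n+1 : ℝ) * x ^ n) x := by
      simpa using hasDerivAt_pow (n+1) x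
    have h2 : HasDerivAt (fun x : ℝ => -b * x ^ 2) (-b * (2 * x)) x := by
      simpa using (hasDerivAt_pow 2 x).const_mul (-b)
    have h3 : HasDerivAt (fun x : ℝ => Real.exp (-b * x ^ 2))
        (Real.exp (-b * x ^ 2) * (-b * (2 * x))) x := h2.exp
    have h4 := ((h1.mul h3).const_mul (-(1/(2*b))))
    refine h4.congr_deriv ?_
    symm
    have hb' : b ≠ 0 := ne_of_gt hb
    apply mul_left_cancel₀ (show (2:ℝ)*b ≠ 0 by positivity)
    rw [hc]
    field_simp
    ring
  have hint : Integrable (fun x : ℝ =>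
      x ^ (n+2) * Real.exp (-b * x ^ 2) - c * (x ^ n * Real.exp (-b * x ^ 2))) :=
    (integrable_pow_mul_gauss hb (n+2)).sub ((integrable_pow_mul_gauss hb n).const_mul c)
  have hzero : ∫ x : ℝ, (x ^ (n+2) * Real.exp (-b * x ^ 2) - c * (x ^ n * Real.exp (-b * x ^ 2))) = 0 := by
    apply integral_deriv_zero hd hint
    · simpa using (tendsto_pow_mul_gauss hb (n+1) atTop tendsto_abs_atTop_atTop).const_mul (-(1/(2*b)))
    · simpa using (tendsto_pow_mul_gauss hb (n+1) atBot tendsto_abs_atBot_atTop).const_mul (-(1/(2*b)))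
  rw [integral_sub (integrable_pow_mul_gauss hb (n+2))
      ((integrable_pow_mul_gauss hb n).const_mul c), integral_const_mul] at hzero
  linarith


lemma integral_gaussianReal_eq (v : ℝ≥0) (hv : v ≠ 0) (f : ℝ → ℝ) :
    ∫ x, f x ∂(gaussianReal 0 v) = ∫ x, gaussianPDFReal 0 v x * f x := by
  rw [gaussianReal_of_var_ne_zero 0 hv]
  have h : (gaussianPDF 0 v) = fun x => ((gaussianPDFReal 0 v x).toNNReal : ℝ≥0∞) := by
    funext x; rfl
  rw [h, integral_withDensity_eq_integral_smul
    ((measurable_gaussianPDFReal 0 v).real_toNNReal) f]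
  congr 1
  funext x
  rw [NNReal.smul_def, Real.coe_toNNReal _ (gaussianPDFReal_nonneg 0 v x)]
  rfl

lemma pdf_form (v : ℝ≥0) (hv : v ≠ 0) (x : ℝ) :
    gaussianPDFReal 0 v x = (Real.sqrt (2 * π * v))⁻¹ * Real.exp (-(2*(v:ℝ))⁻¹ * x ^ 2) := by
  rw [gaussianPDFReal]
  congr 1
  rw [sub_zero]
  congr 1
  field_simp

lemma gint (v : ℝ≥0) (n : ℕ) : Integrable (fun x : ℝ => x ^ n) (gaussianReal 0 v) := by
  by_cases hv : v = 0
  · rw [hv, gaussianReal_zero_var]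
    refine ⟨(measurable_id.pow_const n).aestronglyMeasurable, ?_⟩
    rw [HasFiniteIntegral, lintegral_dirac]
    exact ENNReal.coe_lt_top
  · have hvpos : (0:ℝ) < v := lt_of_le_of_ne v.coe_nonneg (by exact_mod_cast (Ne.symm hv))
    have hb : (0:ℝ) < (2*(v:ℝ))⁻¹ := by positivity
    rw [gaussianReal_of_var_ne_zero 0 hv]
    have h : (gaussianPDF 0 v) = fun x => ((gaussianPDFReal 0 v x).toNNReal : ℝ≥0∞) := by
      funext x; rfl
    rw [h, integrable_withDensity_iff ((measurable_gaussianPDFReal 0 v).real_toNNReal.coe_nnreal_ennreal)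
      (Filter.Eventually.of_forall fun x => ENNReal.coe_lt_top)]
    have : (fun x : ℝ => x ^ n * ((gaussianPDFReal 0 v x).toNNReal : ℝ)) =
        fun x => (Real.sqrt (2 * π * v))⁻¹ * (x ^ n * Real.exp (-(2*(v:ℝ))⁻¹ * x ^ 2)) := by
      funext x
      rw [Real.coe_toNNReal _ (gaussianPDFReal_nonneg 0 v x), pdf_form v hv]
      ring
    simp only [ENNReal.coe_toReal]
    rw [this]
    exact (integrable_pow_mul_gauss hb n).const_mul _

lemma gmoment_step (v : ℝ≥0) (n : ℕ) :
    ∫ x, x ^ (n+2) ∂(gaussianReal 0 v) = ((n:ℝ)+1) * v * ∫ x, x ^ n ∂(gaussianReal 0 v) := by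
  by_cases hv : v = 0
  · rw [hv, gaussianReal_zero_var, integral_dirac]
    norm_num
  · have hvpos : (0:ℝ) < v := lt_of_le_of_ne v.coe_nonneg (by exact_mod_cast (Ne.symm hv))
    have hb : (0:ℝ) < (2*(v:ℝ))⁻¹ := by positivity
    rw [integral_gaussianReal_eq v hv, integral_gaussianReal_eq v hv]
    have hrw : ∀ k : ℕ, (fun x : ℝ => gaussianPDFReal 0 v x * x ^ k) =
        fun x => (Real.sqrt (2 * π * v))⁻¹ * (x ^ k * Real.exp (-(2*(v:ℝ))⁻¹ * x ^ 2)) := by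
      intro k; funext x; rw [pdf_form v hv]; ring
    rw [hrw (n+2), hrw n, integral_const_mul, integral_const_mul, gauss_step hb n]
    have : ((n:ℝ)+1)/(2 * (2*(v:ℝ))⁻¹) = ((n:ℝ)+1) * v := by
      field_simp
    rw [this]
    ring

lemma gmoment2 (v : ℝ≥0) : ∫ x, x ^ 2 ∂(gaussianReal 0 v) = v := by
  have h := gmoment_step v 0
  simp only [pow_zero] at h
  rw [integral_const] at h
  simp at h
  simpa using h

lemma gmoment4 (v : ℝ≥0) : ∫ x, x ^ 4 ∂(gaussianReal 0 v) = 3 * (v:ℝ) ^ 2 := by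
  have h := gmoment_step v 2
  rw [gmoment2 v] at h
  norm_num at h
  rw [h]; ring



section Transfer

variable {p : ℕ} {Ω : Type} [MeasurableSpace Ω] {μ : Measure Ω} [IsProbabilityMeasure μ]
  {X : Ω → Fin p → ℝ} {S : Matrix (Fin p) (Fin p) ℝ}

lemma measurable_L (hX : IsGaussianVec μ X 0 S) (t : Fin p → ℝ) : Measurable (fun ω => t ⬝ᵥ X ω) := by
  apply Finset.measurable_sum
  intro i _
  exact measurable_const.mul ((measurable_pi_apply i).comp hX.1)

lemma map_L (hX : IsGaussianVec μ X 0 S) (t : Fin p → ℝ) :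
    Measure.map (fun ω => t ⬝ᵥ X ω) μ = gaussianReal 0 (Real.toNNReal (t ⬝ᵥ S *ᵥ t)) := by
  have h := hX.2 t
  have h1 : (∑ i, t i * (0 : Fin p → ℝ) i) = 0 := by simp
  have h2 : (∑ i, ∑ j, t i * S i j * t j) = t ⬝ᵥ S *ᵥ t := by
    simp [dotProduct, mulVec, Finset.mul_sum, mul_assoc]
  have h3 : (fun ω => ∑ i, t i * X ω i) = fun ω => t ⬝ᵥ X ω := rfl
  rw [h3, h1, h2] at h
  exact h

lemma quad_nonneg (hpsd : S.PosSemidef) (t : Fin p → ℝ) : 0 ≤ t ⬝ᵥ S *ᵥ t := by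
  have := hpsd.dotProduct_mulVec_nonneg t
  rwa [star_trivial] at this

lemma integrable_L_pow (hX : IsGaussianVec μ X 0 S) (t : Fin p → ℝ) (n : ℕ) :
    Integrable (fun ω => (t ⬝ᵥ X ω) ^ n) μ := by
  have hL := measurable_L hX t
  have := (integrable_map_measure
    (g := fun x : ℝ => x ^ n)
    ((continuous_pow n).aestronglyMeasurable) hL.aemeasurable).mp
    (by rw [map_L hX t]; exact gint _ n)
  exact this

lemma integral_L_pow (hX : IsGaussianVec μ X 0 S) (t : Fin p → ℝ) (n : ℕ) :
    ∫ ω, (t ⬝ᵥ X ω) ^ n ∂μ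
      = ∫ x, x ^ n ∂(gaussianReal 0 (Real.toNNReal (t ⬝ᵥ S *ᵥ t))) := by
  have hL := measurable_L hX t
  rw [← map_L hX t,
    integral_map hL.aemeasurable ((continuous_pow n).aestronglyMeasurable)]

lemma integral_L_sq (hX : IsGaussianVec μ X 0 S) (hpsd : S.PosSemidef) (t : Fin p → ℝ) :
    ∫ ω, (t ⬝ᵥ X ω) ^ 2 ∂μ = t ⬝ᵥ S *ᵥ t := by
  rw [integral_L_pow hX t 2, gmoment2,
    Real.coe_toNNReal _ (quad_nonneg hpsd t)]

lemma integral_L_four (hX : IsGaussianVec μ X 0 S) (hpsd : S.PosSemidef) (t : Fin p → ℝ) :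
    ∫ ω, (t ⬝ᵥ X ω) ^ 4 ∂μ = 3 * (t ⬝ᵥ S *ᵥ t) ^ 2 := by
  rw [integral_L_pow hX t 4, gmoment4,
    Real.coe_toNNReal _ (quad_nonneg hpsd t)]

end Transfer

section Wick

variable {p : ℕ} {Ω : Type} [MeasurableSpace Ω] {μ : Measure Ω} [IsProbabilityMeasure μ]
  {X : Ω → Fin p → ℝ} {S : Matrix (Fin p) (Fin p) ℝ}

lemma symm_of_psd (hpsd : S.PosSemidef) : ∀ i j, S j i = S i j := fun i j => by
  have := congrFun (congrFun hpsd.1 i) j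
  simpa [Matrix.conjTranspose_apply] using this

lemma key2 (hX : IsGaussianVec μ X 0 S) (hpsd : S.PosSemidef) (a b : Fin p) (e : ℝ) :
    (∫ ω, (X ω a + e * X ω b) ^ 2 ∂μ) = S a a + 2*e*S a b + e^2 * S b b
      ∧ Integrable (fun ω => (X ω a + e * X ω b) ^ 2) μ := by
  have hsymm := symm_of_psd hpsd
  set u : Fin p → ℝ := (Pi.single a (1:ℝ) : Fin p → ℝ) + e • (Pi.single b (1:ℝ) : Fin p → ℝ) with hu
  have hl : ∀ ω, u ⬝ᵥ X ω = X ω a + e * X ω b := fun ω => by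
    simp [hu, add_dotProduct, smul_dotProduct, single_dotProduct, smul_eq_mul]
  have hfun : (fun ω => (X ω a + e * X ω b) ^ 2) = fun ω => (u ⬝ᵥ X ω) ^ 2 :=
    funext fun ω => by rw [hl]
  constructor
  · rw [hfun, integral_L_sq hX hpsd u]
    have hq : u ⬝ᵥ S *ᵥ u = S a a + 2*e*S a b + e^2 * S b b := by
      simp [hu, mulVec_add, mulVec_smul, dotProduct_add, add_dotProduct, dotProduct_smul,
        smul_dotProduct, single_dotProduct, dotProduct_single, mulVec_single, smul_eq_mul]
      linear_combination e * hsymm a b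
    rw [hq]
  · rw [hfun]; exact integrable_L_pow hX u 2

lemma moment2 (hX : IsGaussianVec μ X 0 S) (hpsd : S.PosSemidef) (a b : Fin p) :
    ∫ ω, X ω a * X ω b ∂μ = S a b := by
  have h1 := key2 hX hpsd a b 1
  have h2 := key2 hX hpsd a b (-1)
  have hsub := integral_sub h1.2 h2.2
  have heq : (fun ω => (X ω a + 1 * X ω b) ^ 2 - (X ω a + (-1) * X ω b) ^ 2)
      = fun ω => 4 * (X ω a * X ω b) := funext fun ω => by ring
  rw [heq, integral_const_mul, h1.1, h2.1] at hsub
  linarith [hsub]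

lemma key4 (hX : IsGaussianVec μ X 0 S) (hpsd : S.PosSemidef) (a b c d : Fin p) (e2 e3 e4 : ℝ) :
    (∫ ω, (X ω a + e2 * X ω b + e3 * X ω c + e4 * X ω d) ^ 4 ∂μ)
      = 3 * (S a a + e2^2 * S b b + e3^2 * S c c + e4^2 * S d d
          + 2*e2*S a b + 2*e3*S a c + 2*e4*S a d
          + 2*e2*e3*S b c + 2*e2*e4*S b d + 2*e3*e4*S c d) ^ 2
    ∧ Integrable (fun ω => (X ω a + e2 * X ω b + e3 * X ω c + e4 * X ω d) ^ 4) μ := by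
  have hsymm := symm_of_psd hpsd
  set u : Fin p → ℝ := (Pi.single a (1:ℝ) : Fin p → ℝ) + e2 • (Pi.single b (1:ℝ) : Fin p → ℝ)
      + e3 • (Pi.single c (1:ℝ) : Fin p → ℝ) + e4 • (Pi.single d (1:ℝ) : Fin p → ℝ) with hu
  have hl : ∀ ω, u ⬝ᵥ X ω = X ω a + e2 * X ω b + e3 * X ω c + e4 * X ω d := fun ω => by
    simp [hu, add_dotProduct, smul_dotProduct, single_dotProduct, smul_eq_mul]
  have hfun : (fun ω => (X ω a + e2 * X ω b + e3 * X ω c + e4 * X ω d) ^ 4)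
      = fun ω => (u ⬝ᵥ X ω) ^ 4 := funext fun ω => by rw [hl]
  constructor
  · rw [hfun, integral_L_four hX hpsd u]
    have hq : u ⬝ᵥ S *ᵥ u = S a a + e2^2 * S b b + e3^2 * S c c + e4^2 * S d d
          + 2*e2*S a b + 2*e3*S a c + 2*e4*S a d
          + 2*e2*e3*S b c + 2*e2*e4*S b d + 2*e3*e4*S c d := by
      simp [hu, mulVec_add, mulVec_smul, dotProduct_add, add_dotProduct, dotProduct_smul,
        smul_dotProduct, single_dotProduct, dotProduct_single, mulVec_single, smul_eq_mul]
      linear_combination e2 * hsymm a b + e3 * hsymm a c + e4 * hsymm a d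
        + e2*e3 * hsymm b c + e2*e4 * hsymm b d + e3*e4 * hsymm c d
    rw [hq]
  · rw [hfun]; exact integrable_L_pow hX u 4

set_option maxHeartbeats 2000000 in
lemma moment4 (hX : IsGaussianVec μ X 0 S) (hpsd : S.PosSemidef) (a b c d : Fin p) :
    ∫ ω, X ω a * X ω b * X ω c * X ω d ∂μ
      = S a b * S c d + S a c * S b d + S a d * S b c := by
  have k1 := key4 hX hpsd a b c d 1 1 1
  have k2 := key4 hX hpsd a b c d 1 1 (-1)
  have k3 := key4 hX hpsd a b c d 1 (-1) 1
  have k4 := key4 hX hpsd a b c d 1 (-1) (-1)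
  have k5 := key4 hX hpsd a b c d (-1) 1 1
  have k6 := key4 hX hpsd a b c d (-1) 1 (-1)
  have k7 := key4 hX hpsd a b c d (-1) (-1) 1
  have k8 := key4 hX hpsd a b c d (-1) (-1) (-1)
  set g1 : Ω → ℝ := fun ω => (X ω a + 1 * X ω b + 1 * X ω c + 1 * X ω d) ^ 4 with hg1
  set g2 : Ω → ℝ := fun ω => (X ω a + 1 * X ω b + 1 * X ω c + (-1) * X ω d) ^ 4 with hg2
  set g3 : Ω → ℝ := fun ω => (X ω a + 1 * X ω b + (-1) * X ω c + 1 * X ω d) ^ 4 with hg3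
  set g4 : Ω → ℝ := fun ω => (X ω a + 1 * X ω b + (-1) * X ω c + (-1) * X ω d) ^ 4 with hg4
  set g5 : Ω → ℝ := fun ω => (X ω a + (-1) * X ω b + 1 * X ω c + 1 * X ω d) ^ 4 with hg5
  set g6 : Ω → ℝ := fun ω => (X ω a + (-1) * X ω b + 1 * X ω c + (-1) * X ω d) ^ 4 with hg6
  set g7 : Ω → ℝ := fun ω => (X ω a + (-1) * X ω b + (-1) * X ω c + 1 * X ω d) ^ 4 with hg7
  set g8 : Ω → ℝ := fun ω => (X ω a + (-1) * X ω b + (-1) * X ω c + (-1) * X ω d) ^ 4 with hg8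
  have I1 : Integrable g1 μ := k1.2
  have I2 : Integrable g2 μ := k2.2
  have I3 : Integrable g3 μ := k3.2
  have I4 : Integrable g4 μ := k4.2
  have I5 : Integrable g5 μ := k5.2
  have I6 : Integrable g6 μ := k6.2
  have I7 : Integrable g7 μ := k7.2
  have I8 : Integrable g8 μ := k8.2
  have J2 : Integrable (fun ω => g1 ω - g2 ω) μ := I1.sub I2
  have J3 : Integrable (fun ω => g1 ω - g2 ω - g3 ω) μ := J2.sub I3
  have J4 : Integrable (fun ω => g1 ω - g2 ω - g3 ω + g4 ω) μ := J3.add I4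
  have J5 : Integrable (fun ω => g1 ω - g2 ω - g3 ω + g4 ω - g5 ω) μ := J4.sub I5
  have J6 : Integrable (fun ω => g1 ω - g2 ω - g3 ω + g4 ω - g5 ω + g6 ω) μ := J5.add I6
  have J7 : Integrable (fun ω => g1 ω - g2 ω - g3 ω + g4 ω - g5 ω + g6 ω + g7 ω) μ := J6.add I7
  have s18 : ∫ ω, (g1 ω - g2 ω - g3 ω + g4 ω - g5 ω + g6 ω + g7 ω - g8 ω) ∂μ
      = ((((((∫ ω, g1 ω ∂μ - ∫ ω, g2 ω ∂μ) - ∫ ω, g3 ω ∂μ) + ∫ ω, g4 ω ∂μ)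
        - ∫ ω, g5 ω ∂μ) + ∫ ω, g6 ω ∂μ) + ∫ ω, g7 ω ∂μ) - ∫ ω, g8 ω ∂μ := by
    rw [integral_sub J7 I8, integral_add J6 I7, integral_add J5 I6, integral_sub J4 I5,
      integral_add J3 I4, integral_sub J2 I3, integral_sub I1 I2]
  have hpt : (fun ω => g1 ω - g2 ω - g3 ω + g4 ω - g5 ω + g6 ω + g7 ω - g8 ω)
      = fun ω => 192 * (X ω a * X ω b * X ω c * X ω d) := by
    funext ω
    simp only [hg1, hg2, hg3, hg4, hg5, hg6, hg7, hg8]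
    ring
  rw [hpt, integral_const_mul] at s18
  rw [k1.1, k2.1, k3.1, k4.1, k5.1, k6.1, k7.1, k8.1] at s18
  linear_combination s18 / 192

lemma integrable_coord_pow (hX : IsGaussianVec μ X 0 S) (a : Fin p) (n : ℕ) :
    Integrable (fun ω => (X ω a) ^ n) μ := by
  have h := integrable_L_pow hX (Pi.single a (1:ℝ)) n
  have : (fun ω => ((Pi.single a (1:ℝ) : Fin p → ℝ) ⬝ᵥ X ω) ^ n) = fun ω => (X ω a) ^ n := by
    funext ω; rw [single_dotProduct]; ring_nf
  rwa [this] at h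

lemma measurable_coord (hX : IsGaussianVec μ X 0 S) (a : Fin p) :
    Measurable (fun ω => X ω a) := (measurable_pi_apply a).comp hX.1

lemma integrable_prod2 (hX : IsGaussianVec μ X 0 S) (a b : Fin p) :
    Integrable (fun ω => X ω a * X ω b) μ := by
  apply Integrable.mono'
    (((integrable_coord_pow hX a 2).add (integrable_coord_pow hX b 2)).const_mul (1/2))
  · exact ((measurable_coord hX a).mul (measurable_coord hX b)).aestronglyMeasurable
  · refine Filter.Eventually.of_forall fun ω => ?_
    rw [Real.norm_eq_abs]
    simp only [Pi.add_apply]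
    refine abs_le.2 ⟨by nlinarith [sq_nonneg (X ω a + X ω b)], by nlinarith [sq_nonneg (X ω a - X ω b)]⟩

lemma integrable_prod4 (hX : IsGaussianVec μ X 0 S) (a b c d : Fin p) :
    Integrable (fun ω => X ω a * X ω b * X ω c * X ω d) μ := by
  apply Integrable.mono'
    ((((integrable_coord_pow hX a 4).add (integrable_coord_pow hX b 4)).add
      ((integrable_coord_pow hX c 4).add (integrable_coord_pow hX d 4))).const_mul (1/4))
  · exact ((((measurable_coord hX a).mul (measurable_coord hX b)).mul
      (measurable_coord hX c)).mul (measurable_coord hX d)).aestronglyMeasurable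
  · refine Filter.Eventually.of_forall fun ω => ?_
    rw [Real.norm_eq_abs]
    simp only [Pi.add_apply]
    refine abs_le.2 ⟨?_, ?_⟩
    · nlinarith [sq_nonneg (X ω a * X ω b + X ω c * X ω d), sq_nonneg ((X ω a)^2 - (X ω b)^2),
        sq_nonneg ((X ω c)^2 - (X ω d)^2)]
    · nlinarith [sq_nonneg (X ω a * X ω b - X ω c * X ω d), sq_nonneg ((X ω a)^2 - (X ω b)^2),
        sq_nonneg ((X ω c)^2 - (X ω d)^2)]

end Wick


section MainProof

variable {p : ℕ} {Ω : Type} [MeasurableSpace Ω] {μ : Measure Ω} [IsProbabilityMeasure μ]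
  {X : Ω → Fin p → ℝ} {S : Matrix (Fin p) (Fin p) ℝ}

lemma diag_nonneg (hpsd : S.PosSemidef) (i : Fin p) : 0 ≤ S i i := by
  have h := quad_nonneg hpsd (Pi.single i (1:ℝ))
  rwa [mulVec_single_one, single_dotProduct, one_mul] at h

lemma entry_sq_le (hpsd : S.PosSemidef) (i j : Fin p) : (S i j) ^ 2 ≤ S i i * S j j := by
  have hsymm := symm_of_psd hpsd
  have key : ∀ t : ℝ, 0 ≤ S j j * (t * t) + (2 * S i j) * t + S i i := by
    intro t
    have h := quad_nonneg hpsd ((Pi.single i (1:ℝ) : Fin p → ℝ) + t • (Pi.single j (1:ℝ) : Fin p → ℝ))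
    have hq : ((Pi.single i (1:ℝ) : Fin p → ℝ) + t • (Pi.single j (1:ℝ) : Fin p → ℝ)) ⬝ᵥ S *ᵥ
        ((Pi.single i (1:ℝ) : Fin p → ℝ) + t • (Pi.single j (1:ℝ) : Fin p → ℝ))
        = S j j * (t * t) + (2 * S i j) * t + S i i := by
      simp [mulVec_add, mulVec_smul, dotProduct_add, add_dotProduct, dotProduct_smul,
        smul_dotProduct, single_dotProduct, dotProduct_single, mulVec_single, smul_eq_mul]
      linear_combination t * hsymm i j
    rwa [hq] at h
  have hd := discrim_le_zero key
  rw [discrim] at hd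
  nlinarith [hd]

lemma part2bound (q c0 M : ℝ) (hq0 : 0 ≤ q) (hq1 : q < 1) (hc0 : 0 < c0) (hM : 0 < M)
    (hpsd : S.PosSemidef) (hU : memUtau q c0 M S)
    (V : Matrix (Fin p) (Fin p) ℝ) (hV : V.IsSymm) (hVF : ∑ a, ∑ b, (V a b) ^ 2 = 1) :
    2 * ∑ a, ∑ b, ∑ c, ∑ d, V a b * V c d * S a c * S b d
        ≤ 2 * M ^ (2 - q) * c0 * p := by
  have hsymm := symm_of_psd hpsd
  have habs : ∀ i j, |S i j| ≤ M := by
    intro i j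
    have h1 : (S i j)^2 ≤ M * M := le_trans (entry_sq_le hpsd i j)
      (mul_le_mul (hU.1 i) (hU.1 j) (diag_nonneg hpsd j) hM.le)
    nlinarith [abs_nonneg (S i j), sq_abs (S i j)]
  have hMq : (0:ℝ) ≤ M ^ (2 - q) := Real.rpow_nonneg hM.le _
  have hsq : ∀ i j, (S i j)^2 ≤ M ^ (2 - q) * absPow q (S i j) := by
    intro i j
    by_cases h0 : S i j = 0
    · simp [h0, absPow]
    · rw [absPow, if_neg h0]
      have hpos : 0 < |S i j| := abs_pos.2 h0
      have h1 : (S i j)^2 = |S i j| ^ (2 - q) * |S i j| ^ q := by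
        rw [← Real.rpow_add hpos]
        norm_num
      rw [h1]
      exact mul_le_mul_of_nonneg_right
        (Real.rpow_le_rpow (abs_nonneg _) (habs i j) (by linarith))
        (Real.rpow_nonneg (abs_nonneg _) _)
  have hrow : ∀ i, ∑ j, (S i j)^2 ≤ M ^ (2 - q) * c0 := by
    intro i
    calc ∑ j, (S i j)^2 ≤ ∑ j, M ^ (2 - q) * absPow q (S i j) :=
          Finset.sum_le_sum (fun j _ => hsq i j)
      _ = M ^ (2 - q) * ∑ j, absPow q (S i j) := by rw [Finset.mul_sum]
      _ ≤ M ^ (2 - q) * c0 := mul_le_mul_of_nonneg_left (hU.2 i) hMq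
  set A : Fin p → Fin p → ℝ := fun y z => ∑ x, V x y * S x z with hA
  have step1 : ∑ a, ∑ b, ∑ c, ∑ d, V a b * V c d * S a c * S b d
      = ∑ b, ∑ c, A b c * A c b := by
    rw [Finset.sum_comm]
    apply Finset.sum_congr rfl; intro b _
    rw [Finset.sum_comm]
    apply Finset.sum_congr rfl; intro c _
    have h1 : A b c * A c b = (∑ a, V a b * S a c) * (∑ d, V c d * S b d) := by
      congr 1
      apply Finset.sum_congr rfl; intro d _
      rw [hV.apply d c, hsymm b d]
    rw [h1, Finset.sum_mul_sum]
    apply Finset.sum_congr rfl; intro a _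
    apply Finset.sum_congr rfl; intro d _
    ring
  have step3 : ∑ b, ∑ c, A b c * A c b ≤ ∑ b, ∑ c, (A b c)^2 := by
    have h1 : ∑ b, ∑ c, A b c * A c b ≤ ∑ b, ∑ c, ((A b c)^2/2 + (A c b)^2/2) := by
      refine Finset.sum_le_sum fun b _ => Finset.sum_le_sum fun c _ => ?_
      nlinarith [sq_nonneg (A b c - A c b)]
    have h2 : ∑ b, ∑ c, ((A b c)^2/2 + (A c b)^2/2)
        = ∑ b, ∑ c, (A b c)^2/2 + ∑ b, ∑ c, (A c b)^2/2 := by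
      rw [← Finset.sum_add_distrib]
      exact Finset.sum_congr rfl fun b _ => Finset.sum_add_distrib
    have h3 : ∑ b, ∑ c, ((A c b):ℝ)^2/2 = ∑ b, ∑ c, (A b c)^2/2 := Finset.sum_comm
    calc ∑ b, ∑ c, A b c * A c b ≤ ∑ b, ∑ c, ((A b c)^2/2 + (A c b)^2/2) := h1
      _ = ∑ b, ∑ c, (A b c)^2/2 + ∑ b, ∑ c, (A c b)^2/2 := h2
      _ = ∑ b, ∑ c, (A b c)^2 := by
          rw [h3, ← Finset.sum_add_distrib]
          apply Finset.sum_congr rfl; intro b _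
          rw [← Finset.sum_add_distrib]
          exact Finset.sum_congr rfl fun c _ => by ring
  have step4 : ∑ b, ∑ c, (A b c)^2
      ≤ ∑ b, ∑ c, (∑ x, (V x b)^2) * (∑ x, (S x c)^2) := by
    refine Finset.sum_le_sum fun b _ => Finset.sum_le_sum fun c _ => ?_
    exact Finset.sum_mul_sq_le_sq_mul_sq Finset.univ _ _
  have step5 : ∑ b, ∑ c, (∑ x, (V x b)^2) * (∑ x, (S x c)^2)
      = (∑ b, ∑ x, (V x b)^2) * (∑ c, ∑ x, (S x c)^2) := by
    rw [Finset.sum_mul_sum]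
  have hV1 : (∑ b, ∑ x, ((V x b):ℝ)^2) = 1 := by
    rw [Finset.sum_comm]; exact hVF
  have hS1 : (∑ c, ∑ x, ((S x c):ℝ)^2) ≤ p * (M ^ (2 - q) * c0) := by
    calc ∑ c, ∑ x, ((S x c):ℝ)^2 = ∑ c, ∑ x, (S c x)^2 := by
          apply Finset.sum_congr rfl; intro c _
          exact Finset.sum_congr rfl fun x _ => by rw [hsymm c x]
      _ ≤ ∑ _c : Fin p, M ^ (2 - q) * c0 := Finset.sum_le_sum fun c _ => hrow c
      _ = p * (M ^ (2 - q) * c0) := by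
          rw [Finset.sum_const, Finset.card_univ, Fintype.card_fin, nsmul_eq_mul]
  have final : ∑ a, ∑ b, ∑ c, ∑ d, V a b * V c d * S a c * S b d ≤ M ^ (2 - q) * c0 * p := by
    calc ∑ a, ∑ b, ∑ c, ∑ d, V a b * V c d * S a c * S b d
        = ∑ b, ∑ c, A b c * A c b := step1
      _ ≤ ∑ b, ∑ c, (A b c)^2 := step3
      _ ≤ (∑ b, ∑ x, (V x b)^2) * (∑ c, ∑ x, (S x c)^2) := by rw [← step5]; exact step4
      _ ≤ 1 * (p * (M ^ (2 - q) * c0)) := by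
          rw [hV1, one_mul, one_mul]
          exact hS1
      _ = M ^ (2 - q) * c0 * p := by ring
  linarith

end MainProof

end Stmt16Aux

open Stmt16Aux in
set_option maxHeartbeats 2000000 in
/-- Lemma A.1 (first bound): for a mean-zero Gaussian vector `X` with covariance
`Σ ∈ U_τ(q, c₀, M)` and symmetric `V` with `‖V‖_F = 1`,
`Var(∑_{a,b} v_ab X_a X_b) = 2 ∑_{a,b,c,d} v_ab v_cd σ_ac σ_bd ≤ 2 M^{2−q} c₀ p`. -/
theorem stmt16 (q c0 M : ℝ) (hq0 : 0 ≤ q) (hq1 : q < 1) (hc0 : 0 < c0) (hM : 0 < M)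
    {p : ℕ} (S : Matrix (Fin p) (Fin p) ℝ) (hpsd : S.PosSemidef)
    (hU : memUtau q c0 M S)
    (Ω : Type) [MeasurableSpace Ω] (μ : Measure Ω) [IsProbabilityMeasure μ]
    (X : Ω → Fin p → ℝ) (hX : IsGaussianVec μ X 0 S)
    (V : Matrix (Fin p) (Fin p) ℝ) (hV : V.IsSymm) (hVF : ∑ a, ∑ b, (V a b) ^ 2 = 1) :
    (∫ ω, (∑ a, ∑ b, V a b * X ω a * X ω b - ∑ a, ∑ b, V a b * S a b) ^ 2 ∂μ
        = 2 * ∑ a, ∑ b, ∑ c, ∑ d, V a b * V c d * S a c * S b d) ∧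
      2 * ∑ a, ∑ b, ∑ c, ∑ d, V a b * V c d * S a c * S b d
        ≤ 2 * M ^ (2 - q) * c0 * p := by
  constructor
  · set m : ℝ := ∑ a, ∑ b, V a b * S a b with hm
    have hterm2 : ∀ a b : Fin p, ∫ ω, V a b * X ω a * X ω b ∂μ = V a b * S a b := by
      intro a b
      have h : (fun ω => V a b * X ω a * X ω b) = fun ω => V a b * (X ω a * X ω b) :=
        funext fun ω => by ring
      rw [h, integral_const_mul, moment2 hX hpsd a b]
    have hint2 : ∀ a b : Fin p, Integrable (fun ω => V a b * X ω a * X ω b) μ := by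
      intro a b
      have h : (fun ω => V a b * X ω a * X ω b) = fun ω => V a b * (X ω a * X ω b) :=
        funext fun ω => by ring
      rw [h]; exact (integrable_prod2 hX a b).const_mul _
    have hQint : Integrable (fun ω => ∑ a, ∑ b, V a b * X ω a * X ω b) μ :=
      integrable_finset_sum _ fun a _ => integrable_finset_sum _ fun b _ => hint2 a b
    have hEQ : ∫ ω, (∑ a, ∑ b, V a b * X ω a * X ω b) ∂μ = m := by
      rw [integral_finset_sum _ (fun a _ => integrable_finset_sum _ fun b _ => hint2 a b), hm]
      apply Finset.sum_congr rfl; intro a _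
      rw [integral_finset_sum _ (fun b _ => hint2 a b)]
      exact Finset.sum_congr rfl fun b _ => hterm2 a b
    have hsq_pt : ∀ ω, (∑ a, ∑ b, V a b * X ω a * X ω b)^2
        = ∑ a, ∑ b, ∑ c, ∑ d, V a b * V c d * (X ω a * X ω b * X ω c * X ω d) := by
      intro ω
      rw [pow_two, Finset.sum_mul_sum]
      apply Finset.sum_congr rfl; intro a _
      calc ∑ c, (∑ b, V a b * X ω a * X ω b) * (∑ d, V c d * X ω c * X ω d)
          = ∑ c, ∑ b, ∑ d, (V a b * X ω a * X ω b) * (V c d * X ω c * X ω d) := by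
            apply Finset.sum_congr rfl; intro c _
            rw [Finset.sum_mul_sum]
        _ = ∑ b, ∑ c, ∑ d, (V a b * X ω a * X ω b) * (V c d * X ω c * X ω d) :=
            Finset.sum_comm
        _ = ∑ b, ∑ c, ∑ d, V a b * V c d * (X ω a * X ω b * X ω c * X ω d) := by
            refine Finset.sum_congr rfl fun b _ => Finset.sum_congr rfl fun c _ =>
              Finset.sum_congr rfl fun d _ => by ring
    have hint4 : ∀ a b c d : Fin p,
        Integrable (fun ω => V a b * V c d * (X ω a * X ω b * X ω c * X ω d)) μ :=
      fun a b c d => (integrable_prod4 hX a b c d).const_mul _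
    have hQsqfun : (fun ω => (∑ a, ∑ b, V a b * X ω a * X ω b)^2)
        = fun ω => ∑ a, ∑ b, ∑ c, ∑ d, V a b * V c d * (X ω a * X ω b * X ω c * X ω d) :=
      funext hsq_pt
    have hQsqint : Integrable (fun ω => (∑ a, ∑ b, V a b * X ω a * X ω b)^2) μ := by
      rw [hQsqfun]
      exact integrable_finset_sum _ fun a _ => integrable_finset_sum _ fun b _ =>
        integrable_finset_sum _ fun c _ => integrable_finset_sum _ fun d _ => hint4 a b c d
    have hQsq : ∫ ω, (∑ a, ∑ b, V a b * X ω a * X ω b)^2 ∂μ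
        = ∑ a, ∑ b, ∑ c, ∑ d, V a b * V c d * (S a b * S c d + S a c * S b d + S a d * S b c) := by
      rw [hQsqfun,
        integral_finset_sum _ (fun a _ => integrable_finset_sum _ fun b _ =>
          integrable_finset_sum _ fun c _ => integrable_finset_sum _ fun d _ => hint4 a b c d)]
      apply Finset.sum_congr rfl; intro a _
      rw [integral_finset_sum _ (fun b _ => integrable_finset_sum _ fun c _ =>
        integrable_finset_sum _ fun d _ => hint4 a b c d)]
      apply Finset.sum_congr rfl; intro b _
      rw [integral_finset_sum _ (fun c _ => integrable_finset_sum _ fun d _ => hint4 a b c d)]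
      apply Finset.sum_congr rfl; intro c _
      rw [integral_finset_sum _ (fun d _ => hint4 a b c d)]
      apply Finset.sum_congr rfl; intro d _
      rw [integral_const_mul, moment4 hX hpsd a b c d]
    have hexp : (fun ω => (∑ a, ∑ b, V a b * X ω a * X ω b - m)^2)
        = fun ω => ((∑ a, ∑ b, V a b * X ω a * X ω b)^2
          - (2*m) * (∑ a, ∑ b, V a b * X ω a * X ω b) + m^2) := funext fun ω => by ring
    have hsub : Integrable (fun ω => (∑ a, ∑ b, V a b * X ω a * X ω b)^2
        - (2*m) * (∑ a, ∑ b, V a b * X ω a * X ω b)) μ :=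
      hQsqint.sub (hQint.const_mul (2*m))
    rw [hexp, integral_add hsub (integrable_const _),
      integral_sub hQsqint (hQint.const_mul (2*m)), integral_const_mul, integral_const,
      hEQ, hQsq]
    simp only [measure_univ, probReal_univ, ENNReal.toReal_one, smul_eq_mul, one_mul]
    -- split the triple sum
    have hsplit : ∑ a, ∑ b, ∑ c, ∑ d, V a b * V c d * (S a b * S c d + S a c * S b d + S a d * S b c)
        = (∑ a, ∑ b, ∑ c, ∑ d, V a b * V c d * (S a b * S c d))
          + (∑ a, ∑ b, ∑ c, ∑ d, V a b * V c d * (S a c * S b d))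
          + (∑ a, ∑ b, ∑ c, ∑ d, V a b * V c d * (S a d * S b c)) := by
      simp only [mul_add, Finset.sum_add_distrib]
    have hA : (∑ a, ∑ b, ∑ c, ∑ d, V a b * V c d * (S a b * S c d)) = m * m := by
      have h1 : ∀ a b : Fin p, ∑ c, ∑ d, V a b * V c d * (S a b * S c d)
          = (V a b * S a b) * ∑ c, ∑ d, V c d * S c d := by
        intro a b
        rw [Finset.mul_sum]
        apply Finset.sum_congr rfl; intro c _
        rw [Finset.mul_sum]
        exact Finset.sum_congr rfl fun d _ => by ring
      calc (∑ a, ∑ b, ∑ c, ∑ d, V a b * V c d * (S a b * S c d))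
          = ∑ a, ∑ b, (V a b * S a b) * m := by
            exact Finset.sum_congr rfl fun a _ => Finset.sum_congr rfl fun b _ => by
              rw [h1 a b, ← hm]
        _ = m * m := by
            simp only [← Finset.sum_mul]
            rw [← hm]
    have hCB : (∑ a, ∑ b, ∑ c, ∑ d, V a b * V c d * (S a d * S b c))
        = ∑ a, ∑ b, ∑ c, ∑ d, V a b * V c d * (S a c * S b d) := by
      apply Finset.sum_congr rfl; intro a _
      apply Finset.sum_congr rfl; intro b _
      rw [Finset.sum_comm]
      apply Finset.sum_congr rfl; intro c _
      apply Finset.sum_congr rfl; intro d _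
      rw [hV.apply c d]
    have hBT : (∑ a, ∑ b, ∑ c, ∑ d, V a b * V c d * (S a c * S b d))
        = ∑ a, ∑ b, ∑ c, ∑ d, V a b * V c d * S a c * S b d := by
      refine Finset.sum_congr rfl fun a _ => Finset.sum_congr rfl fun b _ =>
        Finset.sum_congr rfl fun c _ => Finset.sum_congr rfl fun d _ => by ring
    rw [hsplit, hA, hCB, hBT]
    ring
  · exact part2bound q c0 M hq0 hq1 hc0 hM hpsd hU V hV hVF
end

section
/- (Lemma A.3.) Let X₁, …, X_n be i.i.d. p-variate Gaussian vectors with mean zero and covariance Σ ∈ U_τ(q, c₀, M), and let Σ̂⁰₁ = X₁X₁ᵀ. Let V₁, …, V_J be symmetric p×p matrices with ‖V_j‖_F = 1 for each j, and for each j let γ_{j1}, …, γ_{jp} be the eigenvalues of Λ^{1/2} Pᵀ V_j P Λ^{1/2} where Σ = PΛPᵀ (so Σ_k γ_{jk} = tr(V_j Σ)). Then E max_{1≤j≤J} (tr(V_j Σ̂⁰₁) − Σ_{k=1}^p γ_{jk})² ≤ C(q, c₀, M) (log J)² p as J → ∞. -/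
open MeasureTheory ProbabilityTheory Matrix Filter
open scoped ENNReal NNReal BigOperators

lemma lp_sum_le {α ι : Type*} [MeasurableSpace α] {μ : Measure α} (s : Finset ι)
    (f : ι → α → ℝ≥0∞) (hf : ∀ i ∈ s, Measurable (f i)) {r : ℝ} (hr : 1 ≤ r) :
    (∫⁻ a, (∑ i ∈ s, f i a) ^ r ∂μ) ^ (1/r) ≤ ∑ i ∈ s, (∫⁻ a, f i a ^ r ∂μ) ^ (1/r) := by
  classical
  induction s using Finset.cons_induction with
  | empty =>
      have hr0 : (0:ℝ) < r := by linarith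
      simp only [Finset.sum_empty]
      simp only [show (0:ℝ≥0∞)^r = 0 from ENNReal.zero_rpow_of_pos hr0, lintegral_zero,
        show ((0:ℝ≥0∞):ℝ≥0∞)^(1/r) = 0 from ENNReal.zero_rpow_of_pos (by positivity), le_refl]
  | cons i s his ih =>
      have hfi := hf i (Finset.mem_cons_self i s)
      have hfs : ∀ j ∈ s, Measurable (f j) := fun j hj => hf j (Finset.mem_cons_of_mem hj)
      simp only [Finset.sum_cons]
      calc (∫⁻ a, (f i a + ∑ j ∈ s, f j a) ^ r ∂μ) ^ (1/r)
          ≤ (∫⁻ a, f i a ^ r ∂μ) ^ (1/r) + (∫⁻ a, (∑ j ∈ s, f j a) ^ r ∂μ) ^ (1/r) :=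
            ENNReal.lintegral_Lp_add_le hfi.aemeasurable
              (Finset.measurable_sum s hfs).aemeasurable hr
        _ ≤ _ := add_le_add le_rfl (ih hfs)

lemma jensen_rpow {α : Type*} [MeasurableSpace α] {μ : Measure α}
    [IsProbabilityMeasure μ] (G : α → ℝ≥0∞) (hG : Measurable G) {s : ℝ} (hs : 1 < s) :
    ∫⁻ a, (G a) ^ (1/s) ∂μ ≤ (∫⁻ a, G a ∂μ) ^ (1/s) := by
  have hs0 : s ≠ 0 := by linarith
  have hpq : s.HolderConjugate (s/(s-1)) := by
    rw [Real.holderConjugate_iff]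
    constructor
    · exact hs
    · rw [inv_div]
      field_simp
      ring
  have := ENNReal.lintegral_mul_le_Lp_mul_Lq μ hpq
    (f := fun a => (G a) ^ (1/s)) (g := fun _ => 1)
    (hG.pow_const _).aemeasurable aemeasurable_const
  simp only [Pi.mul_apply, mul_one] at this
  calc ∫⁻ a, G a ^ (1/s) ∂μ
      ≤ (∫⁻ a, (G a ^ (1/s)) ^ s ∂μ) ^ (1/s) * (∫⁻ _a, (1:ℝ≥0∞) ^ (s/(s-1)) ∂μ) ^ (1/(s/(s-1))) :=
        this
    _ = (∫⁻ a, G a ∂μ) ^ (1/s) := by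
        have h1 : ∀ a, (G a ^ (1/s)) ^ s = G a := by
          intro a
          rw [← ENNReal.rpow_mul, one_div, inv_mul_cancel₀ hs0, ENNReal.rpow_one]
        simp only [h1, ENNReal.one_rpow, lintegral_one, measure_univ, ENNReal.one_rpow, mul_one]

-- pointwise: x^(2k) ≤ (2k)! * exp x for x ≥ 0
lemma pow_le_factorial_mul_exp {x : ℝ} (hx : 0 ≤ x) (n : ℕ) :
    x ^ n ≤ n.factorial * Real.exp x := by
  have h := Real.sum_le_exp_of_nonneg hx (n+1)
  have h2 : x ^ n / n.factorial ≤ Real.exp x := by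
    refine le_trans ?_ h
    refine Finset.single_le_sum (f := fun i => x ^ i / (i.factorial : ℝ)) ?_ ?_
    · intro i _; positivity
    · simp
  have hn : (0:ℝ) < n.factorial := by positivity
  calc x ^ n = (x ^ n / n.factorial) * n.factorial := by field_simp
    _ ≤ Real.exp x * n.factorial := by
        apply mul_le_mul_of_nonneg_right h2 (le_of_lt hn)
    _ = n.factorial * Real.exp x := by ring

lemma gauss_moment (v : ℝ≥0) (k : ℕ) (hk : 1 ≤ k) :
    ∫⁻ y, ENNReal.ofReal (|y| ^ (2*k)) ∂(gaussianReal 0 v) ≤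
      ENNReal.ofReal ((4 * Real.exp 1 * k * v) ^ k) := by
  rcases eq_or_ne v 0 with hv | hv
  · subst hv
    rw [gaussianReal_zero_var, lintegral_dirac]
    simp [zero_pow (show 2*k ≠ 0 by omega)]
  · have hv' : (0:ℝ) < v := by positivity
    set t : ℝ := Real.sqrt (2*k / v) with ht_def
    have htpos : 0 < t := Real.sqrt_pos.2 (by positivity)
    have ht2 : t^2 = 2*k/v := Real.sq_sqrt (by positivity)
    set K : ℝ := (2*k).factorial / t^(2*k) * Real.exp (v * t^2 / 2) with hK_def
    have hK0 : 0 ≤ K := by positivity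
    -- pointwise bound
    have key : ∀ y : ℝ, gaussianPDFReal 0 v y * |y| ^ (2*k) ≤
        K * (gaussianPDFReal (t*v) v y + gaussianPDFReal (-(t*v)) v y) := by
      intro y
      have hstep1 : |y| ^ (2*k) * Real.exp (-(y-0)^2/(2*v)) ≤
          K * (Real.exp (-(y-t*v)^2/(2*v)) + Real.exp (-(y-(-(t*v)))^2/(2*v))) := by
        have h1 : |y| ^ (2*k) ≤ (2*k).factorial / t^(2*k) * Real.exp (t * |y|) := by
          have := pow_le_factorial_mul_exp (mul_nonneg htpos.le (abs_nonneg y)) (2*k)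
          have ht2k : (0:ℝ) < t ^ (2*k) := by positivity
          rw [mul_pow] at this
          calc |y| ^ (2*k) = t ^ (2*k) * |y| ^ (2*k) / t ^ (2*k) := by field_simp
            _ ≤ ((2*k).factorial * Real.exp (t * |y|)) / t ^ (2*k) := by gcongr
            _ = (2*k).factorial / t^(2*k) * Real.exp (t * |y|) := by ring
        have h2 : Real.exp (t * |y|) * Real.exp (-(y-0)^2/(2*v)) =
            Real.exp (v * t^2 / 2) * Real.exp (-(|y| - t*v)^2/(2*v)) := by
          rw [← Real.exp_add, ← Real.exp_add]
          congr 1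
          have hyy : |y|^2 = y^2 := sq_abs y
          field_simp
          nlinarith [sq_abs y]
        have h3 : Real.exp (-(|y| - t*v)^2/(2*v)) ≤
            Real.exp (-(y-t*v)^2/(2*v)) + Real.exp (-(y-(-(t*v)))^2/(2*v)) := by
          rcases le_or_gt 0 y with hy | hy
          · rw [abs_of_nonneg hy]
            exact le_add_of_nonneg_right (Real.exp_pos _).le
          · rw [abs_of_neg hy]
            have : (-y - t*v)^2 = (y-(-(t*v)))^2 := by ring
            rw [this]
            exact le_add_of_nonneg_left (Real.exp_pos _).le
        calc |y| ^ (2*k) * Real.exp (-(y-0)^2/(2*v))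
            ≤ ((2*k).factorial / t^(2*k) * Real.exp (t * |y|)) * Real.exp (-(y-0)^2/(2*v)) := by
              apply mul_le_mul_of_nonneg_right h1 (Real.exp_pos _).le
          _ = (2*k).factorial / t^(2*k) * (Real.exp (t * |y|) * Real.exp (-(y-0)^2/(2*v))) := by
              ring
          _ = K * Real.exp (-(|y| - t*v)^2/(2*v)) := by rw [h2, hK_def]; ring
          _ ≤ K * (Real.exp (-(y-t*v)^2/(2*v)) + Real.exp (-(y-(-(t*v)))^2/(2*v))) := by
              apply mul_le_mul_of_nonneg_left h3 hK0
      simp only [gaussianPDFReal_def]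
      have hc : 0 ≤ (Real.sqrt (2 * Real.pi * v))⁻¹ := by positivity
      calc (Real.sqrt (2 * Real.pi * v))⁻¹ * Real.exp (-(y-0)^2/(2*v)) * |y| ^ (2*k)
          = (Real.sqrt (2 * Real.pi * v))⁻¹ * (|y| ^ (2*k) * Real.exp (-(y-0)^2/(2*v))) := by ring
        _ ≤ (Real.sqrt (2 * Real.pi * v))⁻¹ *
            (K * (Real.exp (-(y-t*v)^2/(2*v)) + Real.exp (-(y-(-(t*v)))^2/(2*v)))) :=
            mul_le_mul_of_nonneg_left hstep1 hc
        _ = K * ((Real.sqrt (2 * Real.pi * v))⁻¹ * Real.exp (-(y-t*v)^2/(2*v)) +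
            (Real.sqrt (2 * Real.pi * v))⁻¹ * Real.exp (-(y-(-(t*v)))^2/(2*v))) := by ring
    -- integrate
    have hmeas : Measurable fun y : ℝ => ENNReal.ofReal (|y| ^ (2*k)) :=
      (measurable_abs.pow_const _).ennreal_ofReal
    rw [gaussianReal_of_var_ne_zero 0 hv,
      lintegral_withDensity_eq_lintegral_mul _ (measurable_gaussianPDF 0 v) hmeas]
    have hb : ∫⁻ y, (gaussianPDF 0 v * fun y => ENNReal.ofReal (|y| ^ (2*k))) y ≤
        ENNReal.ofReal (2 * K) := by
      have : ∀ y : ℝ, (gaussianPDF 0 v * fun y => ENNReal.ofReal (|y| ^ (2*k))) y ≤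
          ENNReal.ofReal K * (gaussianPDF (t*v) v y + gaussianPDF (-(t*v)) v y) := by
        intro y
        simp only [Pi.mul_apply, gaussianPDF_def]
        rw [← ENNReal.ofReal_mul (gaussianPDFReal_nonneg 0 v y),
          ← ENNReal.ofReal_add (gaussianPDFReal_nonneg _ v y) (gaussianPDFReal_nonneg _ v y),
          ← ENNReal.ofReal_mul hK0]
        exact ENNReal.ofReal_le_ofReal (key y)
      calc ∫⁻ y, (gaussianPDF 0 v * fun y => ENNReal.ofReal (|y| ^ (2*k))) y
          ≤ ∫⁻ y, ENNReal.ofReal K * (gaussianPDF (t*v) v y + gaussianPDF (-(t*v)) v y) :=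
            lintegral_mono this
        _ = ENNReal.ofReal K * ((∫⁻ y, gaussianPDF (t*v) v y) + ∫⁻ y, gaussianPDF (-(t*v)) v y) := by
            rw [lintegral_const_mul _ (by exact (measurable_gaussianPDF _ v).add (measurable_gaussianPDF _ v) : Measurable fun y => gaussianPDF (t*v) v y + gaussianPDF (-(t*v)) v y),
              lintegral_add_left (measurable_gaussianPDF _ v)]
        _ = ENNReal.ofReal K * 2 := by
            rw [lintegral_gaussianPDF_eq_one _ hv, lintegral_gaussianPDF_eq_one _ hv]; norm_num
        _ = ENNReal.ofReal (2 * K) := by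
            rw [ENNReal.ofReal_mul (by norm_num : (0:ℝ) ≤ 2), ENNReal.ofReal_ofNat, mul_comm]
    refine hb.trans (ENNReal.ofReal_le_ofReal ?_)
    -- 2 * K ≤ (4 e k v)^k
    have ht2k : t ^ (2*k) = (2*k/v) ^ k := by
      rw [pow_mul, ht2]
    have hvt : v * t^2 / 2 = k := by
      rw [ht2]; field_simp
    have hfact : ((2*k).factorial : ℝ) ≤ (2*k) ^ (2*k) := by
      exact_mod_cast Nat.factorial_le_pow (2*k)
    have hKval : K = (2*k).factorial * (v / (2*k)) ^ k * Real.exp 1 ^ k := by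
      have hexp : Real.exp (k:ℝ) = Real.exp 1 ^ k := by
        rw [← Real.exp_nat_mul]; norm_num
      have hv0 : (v:ℝ) ≠ 0 := ne_of_gt hv'
      rw [hK_def, ht2k, hvt, hexp, div_pow, div_pow]
      field_simp
    rw [hKval]
    have hek : (0:ℝ) < Real.exp 1 := Real.exp_pos 1
    have h2k : (0:ℝ) < 2*k := by positivity
    calc 2 * ((2*k).factorial * (v / (2*k)) ^ k * Real.exp 1 ^ k)
        ≤ 2 * (((2*k):ℝ) ^ (2*k) * (v / (2*k)) ^ k * Real.exp 1 ^ k) := by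
          apply mul_le_mul_of_nonneg_left _ (by norm_num)
          apply mul_le_mul_of_nonneg_right _ (by positivity)
          apply mul_le_mul_of_nonneg_right hfact (by positivity)
      _ = 2 * ((2*k*v) ^ k * Real.exp 1 ^ k) := by
          rw [pow_mul]
          congr 2
          rw [← mul_pow]
          congr 1
          field_simp
      _ ≤ 2 ^ k * ((2*k*v) ^ k * Real.exp 1 ^ k) := by
          apply mul_le_mul_of_nonneg_right _ (by positivity)
          calc (2:ℝ) = 2^1 := by norm_num
            _ ≤ 2^k := pow_le_pow_right₀ (by norm_num) hk
      _ = (4 * Real.exp 1 * k * v) ^ k := by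
          rw [← mul_pow, ← mul_pow]
          congr 1
          ring


section matrixlemmas
variable {p : ℕ} {q c0 M : ℝ} {S : Matrix (Fin p) (Fin p) ℝ}

lemma quad_nonneg (hS : S.PosSemidef) (u : Fin p → ℝ) :
    0 ≤ ∑ i, ∑ j, u i * S i j * u j := by
  have h := hS.dotProduct_mulVec_nonneg u
  simp only [dotProduct, Matrix.mulVec, Pi.star_apply, star_trivial] at h
  refine le_of_le_of_eq h ?_
  rw [Finset.sum_congr rfl]
  intro i _
  rw [Finset.mul_sum]
  exact Finset.sum_congr rfl fun j _ => by ring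

lemma Ssymm (hS : S.PosSemidef) (a b : Fin p) : S b a = S a b := by
  have h := congrFun (congrFun hS.1 a) b
  simpa [Matrix.conjTranspose_apply] using h

lemma base_sum (S : Matrix (Fin p) (Fin p) ℝ) (c d : Fin p) (α β : ℝ) :
    (∑ i, ∑ j, (if i = c then α else 0) * S i j * (if j = d then β else 0))
      = α * S c d * β := by
  simp [ite_mul, mul_ite, zero_mul, mul_zero, Finset.sum_ite_eq']

lemma diag_nonneg (hS : S.PosSemidef) (a : Fin p) : 0 ≤ S a a := by
  have h := quad_nonneg hS (fun i => if i = a then 1 else 0)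
  rwa [base_sum S a a 1 1, one_mul, mul_one] at h

lemma entry_bound (hS : S.PosSemidef) (hd : ∀ i, S i i ≤ M) (a b : Fin p) : |S a b| ≤ M := by
  rcases eq_or_ne a b with rfl | hab
  · rw [abs_of_nonneg (diag_nonneg hS a)]; exact hd a
  · have hexp : ∀ ε : ℝ, ∑ i, ∑ j,
        ((if i = a then (1:ℝ) else 0) + (if i = b then ε else 0)) * S i j *
        ((if j = a then (1:ℝ) else 0) + (if j = b then ε else 0)) =
        S a a + 2 * ε * S a b + ε ^ 2 * S b b := by
      intro ε
      have hterm : ∀ i j : Fin p,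
          ((if i = a then (1:ℝ) else 0) + (if i = b then ε else 0)) * S i j *
          ((if j = a then (1:ℝ) else 0) + (if j = b then ε else 0)) =
          (if i = a then (1:ℝ) else 0) * S i j * (if j = a then (1:ℝ) else 0) +
          (if i = a then (1:ℝ) else 0) * S i j * (if j = b then ε else 0) +
          ((if i = b then ε else 0) * S i j * (if j = a then (1:ℝ) else 0) +
          (if i = b then ε else 0) * S i j * (if j = b then ε else 0)) := by
        intro i j; ring
      simp_rw [hterm, Finset.sum_add_distrib]
      rw [base_sum, base_sum, base_sum, base_sum, Ssymm hS a b]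
      ring
    have h1 := quad_nonneg hS (fun i => (if i = a then (1:ℝ) else 0) + (if i = b then 1 else 0))
    have h2 := quad_nonneg hS (fun i => (if i = a then (1:ℝ) else 0) + (if i = b then -1 else 0))
    rw [hexp 1] at h1
    rw [hexp (-1)] at h2
    have hda := hd a
    have hdb := hd b
    rw [abs_le]
    constructor <;> nlinarith

lemma row_abs_sum (hq0 : 0 ≤ q) (hq1 : q < 1) (hM : 0 < M)
    (hS : S.PosSemidef) (hU : memUtau q c0 M S) (a : Fin p) :
    ∑ b, |S a b| ≤ M ^ (1 - q) * c0 := by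
  have hstep : ∀ b, |S a b| ≤ M ^ (1 - q) * absPow q (S a b) := by
    intro b
    rcases eq_or_ne (S a b) 0 with h0 | h0
    · simp [h0, absPow]
    · have habs : 0 < |S a b| := abs_pos.2 h0
      rw [absPow, if_neg h0]
      calc |S a b| = |S a b| ^ (1 - q) * |S a b| ^ q := by
            rw [← Real.rpow_add habs]; norm_num
        _ ≤ M ^ (1 - q) * |S a b| ^ q := by
            apply mul_le_mul_of_nonneg_right _ (Real.rpow_nonneg (abs_nonneg _) q)
            exact Real.rpow_le_rpow (abs_nonneg _) (entry_bound hS hU.1 a b) (by linarith)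
  calc ∑ b, |S a b| ≤ ∑ b, M ^ (1 - q) * absPow q (S a b) := Finset.sum_le_sum fun b _ => hstep b
    _ = M ^ (1 - q) * ∑ b, absPow q (S a b) := by rw [Finset.mul_sum]
    _ ≤ M ^ (1 - q) * c0 := by
        apply mul_le_mul_of_nonneg_left (hU.2 a) (Real.rpow_nonneg hM.le _)

lemma quad_bound (hq0 : 0 ≤ q) (hq1 : q < 1) (hM : 0 < M)
    (hS : S.PosSemidef) (hU : memUtau q c0 M S) (u : Fin p → ℝ) :
    ∑ i, ∑ j, u i * S i j * u j ≤ (M ^ (1 - q) * c0) * ∑ i, u i ^ 2 := by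
  set C₁ := M ^ (1 - q) * c0 with hC₁
  have hrow := row_abs_sum hq0 hq1 hM hS hU
  have hterm : ∀ i j : Fin p, u i * S i j * u j ≤ |S i j| * ((u i ^ 2 + u j ^ 2) / 2) := by
    intro i j
    have h1 : u i * S i j * u j ≤ |u i * S i j * u j| := le_abs_self _
    rw [abs_mul, abs_mul] at h1
    refine h1.trans ?_
    have h2 : |u i| * |u j| ≤ (u i ^ 2 + u j ^ 2) / 2 := by nlinarith [sq_abs (u i), sq_abs (u j), sq_nonneg (|u i| - |u j|)]
    calc |u i| * |S i j| * |u j| = |S i j| * (|u i| * |u j|) := by ring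
      _ ≤ |S i j| * ((u i ^ 2 + u j ^ 2) / 2) := mul_le_mul_of_nonneg_left h2 (abs_nonneg _)
  calc ∑ i, ∑ j, u i * S i j * u j
      ≤ ∑ i, ∑ j, |S i j| * ((u i ^ 2 + u j ^ 2) / 2) :=
        Finset.sum_le_sum fun i _ => Finset.sum_le_sum fun j _ => hterm i j
    _ = (∑ i, (∑ j, |S i j|) * u i ^ 2) / 2 + (∑ j, (∑ i, |S i j|) * u j ^ 2) / 2 := by
        have hsplit : ∀ i j : Fin p, |S i j| * ((u i ^ 2 + u j ^ 2) / 2) =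
            |S i j| * u i ^ 2 / 2 + |S i j| * u j ^ 2 / 2 := fun i j => by ring
        simp_rw [hsplit, Finset.sum_add_distrib]
        congr 1
        · rw [Finset.sum_div]
          refine Finset.sum_congr rfl fun i _ => ?_
          rw [Finset.sum_mul, Finset.sum_div]
        · rw [Finset.sum_comm, Finset.sum_div]
          refine Finset.sum_congr rfl fun j _ => ?_
          rw [Finset.sum_mul, Finset.sum_div]
    _ ≤ (∑ i, C₁ * u i ^ 2) / 2 + (∑ j, C₁ * u j ^ 2) / 2 := by
        have hA : (∑ i, (∑ j, |S i j|) * u i ^ 2) ≤ ∑ i, C₁ * u i ^ 2 :=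
          Finset.sum_le_sum fun i _ => mul_le_mul_of_nonneg_right (hrow i) (sq_nonneg _)
        have hB : (∑ j, (∑ i, |S i j|) * u j ^ 2) ≤ ∑ j, C₁ * u j ^ 2 := by
          refine Finset.sum_le_sum fun j _ => ?_
          have h3 : ∑ i, |S i j| = ∑ i, |S j i| :=
            Finset.sum_congr rfl fun i _ => by rw [Ssymm hS j i]
          rw [h3]
          exact mul_le_mul_of_nonneg_right (hrow j) (sq_nonneg _)
        linarith
    _ = C₁ * ∑ i, u i ^ 2 := by rw [← Finset.mul_sum]; ring
  
lemma frob_row (hq0 : 0 ≤ q) (hq1 : q < 1) (hM : 0 < M)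
    (hS : S.PosSemidef) (hU : memUtau q c0 M S) (a : Fin p) :
    ∑ b, (S a b) ^ 2 ≤ M * (M ^ (1 - q) * c0) := by
  calc ∑ b, (S a b) ^ 2 = ∑ b, |S a b| * |S a b| := by
        refine Finset.sum_congr rfl fun b _ => ?_
        rw [sq, ← abs_mul_abs_self]
    _ ≤ ∑ b, M * |S a b| := Finset.sum_le_sum fun b _ =>
        mul_le_mul_of_nonneg_right (entry_bound hS hU.1 a b) (abs_nonneg _)
    _ = M * ∑ b, |S a b| := by rw [Finset.mul_sum]
    _ ≤ M * (M ^ (1 - q) * c0) := mul_le_mul_of_nonneg_left (row_abs_sum hq0 hq1 hM hS hU a) hM.le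

end matrixlemmas
lemma lin_moment {p : ℕ} {Ω : Type} [MeasurableSpace Ω] (μ : Measure Ω)
    (X0 : Ω → Fin p → ℝ) (hXm : Measurable X0)
    (S : Matrix (Fin p) (Fin p) ℝ)
    (hmap : ∀ u : Fin p → ℝ, Measure.map (fun ω => ∑ i, u i * X0 ω i) μ =
      gaussianReal 0 (Real.toNNReal (∑ i, ∑ j, u i * S i j * u j)))
    (u : Fin p → ℝ) {w : ℝ} (hw0 : 0 ≤ w) (hw : ∑ i, ∑ j, u i * S i j * u j ≤ w)
    (k : ℕ) (hk : 1 ≤ k) :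
    ∫⁻ ω, ENNReal.ofReal (|∑ i, u i * X0 ω i| ^ (2*k)) ∂μ ≤
      ENNReal.ofReal ((4 * Real.exp 1 * k * w) ^ k) := by
  have hmeasY : Measurable (fun ω => ∑ i, u i * X0 ω i) :=
    Finset.measurable_sum _ fun i _ => measurable_const.mul ((measurable_pi_apply i).comp hXm)
  have hmf : Measurable fun y : ℝ => ENNReal.ofReal (|y| ^ (2*k)) :=
    (measurable_abs.pow_const _).ennreal_ofReal
  rw [← MeasureTheory.lintegral_map hmf hmeasY, hmap u]
  refine (gauss_moment _ k hk).trans (ENNReal.ofReal_le_ofReal ?_)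
  have hν : ((Real.toNNReal (∑ i, ∑ j, u i * S i j * u j)) : ℝ) ≤ w := by
    rw [Real.coe_toNNReal']
    exact max_le hw hw0
  have h4 : (0:ℝ) ≤ 4 * Real.exp 1 * k := by positivity
  exact pow_le_pow_left₀ (by positivity) (by nlinarith) k

lemma pow_m_root {z : ℝ} (hz : 0 ≤ z) {m : ℕ} (hm : 1 ≤ m) :
    ((z ^ m : ℝ)) ^ (1/(((2*m:ℕ):ℝ))) = Real.sqrt z := by
  have hm0 : (m:ℝ) ≠ 0 := by positivity
  rw [← Real.rpow_natCast z m, ← Real.rpow_mul hz]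
  have h : (m:ℝ) * (1/(((2*m:ℕ):ℝ))) = 1/2 := by
    push_cast
    field_simp
  rw [h, ← Real.sqrt_eq_rpow]

lemma even_pow_root {z : ℝ} (hz : 0 ≤ z) (m : ℕ) :
    ((z ^ (2*m) : ℝ)) ^ ((1:ℝ)/2) = z ^ m := by
  rw [show 2*m = m*2 from mul_comm 2 m, pow_mul, ← Real.sqrt_eq_rpow,
    Real.sqrt_sq_eq_abs, abs_of_nonneg (pow_nonneg hz m)]
lemma pera_bound {p : ℕ} {Ω : Type} [MeasurableSpace Ω] (μ : Measure Ω) [IsProbabilityMeasure μ]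
    (X0 : Ω → Fin p → ℝ) (hXm : Measurable X0)
    (S : Matrix (Fin p) (Fin p) ℝ)
    (hmap : ∀ u : Fin p → ℝ, Measure.map (fun ω => ∑ i, u i * X0 ω i) μ =
      gaussianReal 0 (Real.toNNReal (∑ i, ∑ j, u i * S i j * u j)))
    {M C₁ : ℝ} (hM : 0 ≤ M) (hC₁ : 0 ≤ C₁)
    (hdiag : ∀ i, S i i ≤ M)
    (hquad : ∀ u : Fin p → ℝ, ∑ i, ∑ j, u i * S i j * u j ≤ C₁ * ∑ i, u i ^ 2)
    (hfrob : ∀ i, ∑ b, (S i b) ^ 2 ≤ M * C₁)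
    (W : Matrix (Fin p) (Fin p) ℝ)
    (m : ℕ) (hm : 1 ≤ m) (a : Fin p) :
    (∫⁻ ω, (ENNReal.ofReal |X0 ω a * (∑ b, W a b * X0 ω b) - (∑ b, W a b * S a b)|)
        ^ (((2*m:ℕ)):ℝ) ∂μ) ^ (1/(((2*m:ℕ)):ℝ))
      ≤ ENNReal.ofReal ((8 * Real.exp 1 * m + 1) *
          (Real.sqrt (M * C₁) * Real.sqrt (∑ b, W a b ^ 2))) := by
  classical
  have hm0 : (m:ℝ) ≠ 0 := by positivity
  set e1 : ℝ := Real.exp 1 with he1_def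
  have he1 : (1:ℝ) ≤ e1 := by
    rw [he1_def]; nlinarith [Real.add_one_le_exp (1:ℝ)]
  set r : ℝ := (((2*m:ℕ)):ℝ) with hr_def
  have hr1 : 1 ≤ r := by rw [hr_def]; exact_mod_cast (by omega : 1 ≤ 2*m)
  have hrpos : (0:ℝ) < r := by linarith
  have hr0 : r ≠ 0 := ne_of_gt hrpos
  set sa : ℝ := ∑ b, W a b ^ 2 with hsa_def
  have hsa0 : 0 ≤ sa := Finset.sum_nonneg fun b _ => sq_nonneg _
  have hXa : Measurable fun ω => X0 ω a := (measurable_pi_apply a).comp hXm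
  have hRa : Measurable fun ω => ∑ b, W a b * X0 ω b :=
    Finset.measurable_sum _ fun b _ => measurable_const.mul ((measurable_pi_apply b).comp hXm)
  set z1 : ℝ := 4 * e1 * ((2*m:ℕ):ℝ) * M with hz1_def
  set z2 : ℝ := 4 * e1 * ((2*m:ℕ):ℝ) * (C₁ * sa) with hz2_def
  have hz1 : 0 ≤ z1 := by rw [hz1_def]; positivity
  have hz2 : 0 ≤ z2 := by rw [hz2_def]; positivity
  -- moment bounds for the two linear functionals
  have hXmom : ∫⁻ ω, ENNReal.ofReal (|X0 ω a| ^ (2*(2*m))) ∂μ ≤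
      ENNReal.ofReal (z1 ^ (2*m)) := by
    have hw : ∑ i, ∑ j, (if i = a then (1:ℝ) else 0) * S i j * (if j = a then (1:ℝ) else 0) ≤ M := by
      rw [base_sum]; simpa using hdiag a
    have hb := lin_moment μ X0 hXm S hmap (fun i => if i = a then (1:ℝ) else 0) hM hw (2*m)
      (by omega)
    have hfun : ∀ ω : Ω, ∑ i, (if i = a then (1:ℝ) else 0) * X0 ω i = X0 ω a := by
      intro ω; simp [ite_mul, one_mul, zero_mul]
    simp only [hfun] at hb
    exact hb
  have hRmom : ∫⁻ ω, ENNReal.ofReal (|∑ b, W a b * X0 ω b| ^ (2*(2*m))) ∂μ ≤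
      ENNReal.ofReal (z2 ^ (2*m)) := by
    have hw : ∑ i, ∑ j, W a i * S i j * W a j ≤ C₁ * sa := hquad (fun b => W a b)
    exact lin_moment μ X0 hXm S hmap (fun b => W a b) (by positivity) hw (2*m) (by omega)
  -- Hölder for the product
  have hconj : Real.HolderConjugate 2 2 := by
    rw [Real.holderConjugate_iff]; norm_num
  have hconv : ∀ x : ℝ, ((ENNReal.ofReal |x|) ^ r) ^ (2:ℝ) = ENNReal.ofReal (|x| ^ (2*(2*m))) := by
    intro x
    rw [← ENNReal.rpow_mul, ENNReal.ofReal_rpow_of_nonneg (abs_nonneg x) (by positivity)]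
    congr 1
    rw [← Real.rpow_natCast |x| (2*(2*m))]
    congr 1
    rw [hr_def]; push_cast; ring
  have hholder : ∫⁻ ω, (ENNReal.ofReal |X0 ω a * (∑ b, W a b * X0 ω b)|) ^ r ∂μ ≤
      ENNReal.ofReal (z1 ^ m * z2 ^ m) := by
    have hFmeas : Measurable fun ω => (ENNReal.ofReal |X0 ω a|) ^ r :=
      (hXa.abs.ennreal_ofReal).pow_const _
    have hGmeas : Measurable fun ω => (ENNReal.ofReal |∑ b, W a b * X0 ω b|) ^ r :=
      (hRa.abs.ennreal_ofReal).pow_const _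
    calc ∫⁻ ω, (ENNReal.ofReal |X0 ω a * (∑ b, W a b * X0 ω b)|) ^ r ∂μ
        = ∫⁻ ω, ((fun ω => (ENNReal.ofReal |X0 ω a|) ^ r) *
            fun ω => (ENNReal.ofReal |∑ b, W a b * X0 ω b|) ^ r) ω ∂μ := by
          refine lintegral_congr fun ω => ?_
          simp only [Pi.mul_apply]
          rw [abs_mul, ENNReal.ofReal_mul (abs_nonneg _),
            ENNReal.mul_rpow_of_nonneg _ _ hrpos.le]
      _ ≤ (∫⁻ ω, ((ENNReal.ofReal |X0 ω a|) ^ r) ^ (2:ℝ) ∂μ) ^ (1/(2:ℝ)) *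
          (∫⁻ ω, ((ENNReal.ofReal |∑ b, W a b * X0 ω b|) ^ r) ^ (2:ℝ) ∂μ) ^ (1/(2:ℝ)) :=
          ENNReal.lintegral_mul_le_Lp_mul_Lq μ hconj hFmeas.aemeasurable hGmeas.aemeasurable
      _ ≤ (ENNReal.ofReal (z1 ^ (2*m))) ^ (1/(2:ℝ)) * (ENNReal.ofReal (z2 ^ (2*m))) ^ (1/(2:ℝ)) := by
          gcongr
          · simp only [hconv]; exact hXmom
          · simp only [hconv]; exact hRmom
      _ = ENNReal.ofReal (z1 ^ m * z2 ^ m) := by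
          rw [ENNReal.ofReal_rpow_of_nonneg (by positivity) (by norm_num),
            ENNReal.ofReal_rpow_of_nonneg (by positivity) (by norm_num),
            ← ENNReal.ofReal_mul (by positivity)]
          rw [even_pow_root hz1, even_pow_root hz2]
  -- the constant
  set c : ℝ := ∑ b, W a b * S a b with hc_def
  have hcbound : |c| ≤ Real.sqrt (M*C₁) * Real.sqrt sa := by
    have hcs := Finset.sum_mul_sq_le_sq_mul_sq Finset.univ (fun b => W a b) (fun b => S a b)
    have h1 : c^2 ≤ sa * (M*C₁) := by
      refine le_trans hcs ?_
      have := hfrob a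
      apply mul_le_mul_of_nonneg_left this hsa0
    calc |c| = Real.sqrt (c^2) := (Real.sqrt_sq_eq_abs c).symm
      _ ≤ Real.sqrt (sa * (M*C₁)) := Real.sqrt_le_sqrt h1
      _ = Real.sqrt sa * Real.sqrt (M*C₁) := Real.sqrt_mul hsa0 _
      _ = Real.sqrt (M*C₁) * Real.sqrt sa := mul_comm _ _
  -- assemble via Minkowski with the constant
  have hmink := ENNReal.lintegral_Lp_add_le (μ := μ)
    (f := fun ω => ENNReal.ofReal |X0 ω a * (∑ b, W a b * X0 ω b)|)
    (g := fun _ => ENNReal.ofReal |c|)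
    ((hXa.mul hRa).abs.ennreal_ofReal).aemeasurable aemeasurable_const hr1
  simp only [Pi.add_apply] at hmink
  have hroot : ENNReal.ofReal (z1 ^ m * z2 ^ m) ^ (1/r) ≤
      ENNReal.ofReal (8*e1*m*(Real.sqrt (M*C₁)*Real.sqrt sa)) := by
    have hzz : z1 ^ m * z2 ^ m = ((8*e1*m)^2 * ((M*C₁)*sa)) ^ m := by
      rw [← mul_pow]
      congr 1
      rw [hz1_def, hz2_def]
      push_cast
      ring
    rw [ENNReal.ofReal_rpow_of_nonneg (by positivity) (by positivity), hzz, hr_def,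
      pow_m_root (by positivity) hm]
    apply ENNReal.ofReal_le_ofReal
    rw [Real.sqrt_mul (by positivity : (0:ℝ) ≤ (8*e1*m)^2), Real.sqrt_sq (by positivity),
      Real.sqrt_mul (by positivity : (0:ℝ) ≤ M*C₁)]
  calc (∫⁻ ω, (ENNReal.ofReal |X0 ω a * (∑ b, W a b * X0 ω b) - c|) ^ r ∂μ) ^ (1/r)
      ≤ (∫⁻ ω, (ENNReal.ofReal |X0 ω a * (∑ b, W a b * X0 ω b)| +
          ENNReal.ofReal |c|) ^ r ∂μ) ^ (1/r) := by
        gcongr with ω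
        rw [← ENNReal.ofReal_add (abs_nonneg _) (abs_nonneg _)]
        exact ENNReal.ofReal_le_ofReal (abs_sub _ _)
    _ ≤ (∫⁻ ω, (ENNReal.ofReal |X0 ω a * (∑ b, W a b * X0 ω b)|) ^ r ∂μ) ^ (1/r) +
        (∫⁻ _ω : Ω, (ENNReal.ofReal |c|) ^ r ∂μ) ^ (1/r) := hmink
    _ ≤ ENNReal.ofReal (z1 ^ m * z2 ^ m) ^ (1/r) + ENNReal.ofReal |c| := by
        refine add_le_add ?_ ?_
        · exact ENNReal.rpow_le_rpow hholder (by positivity)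
        · rw [lintegral_const, measure_univ, mul_one, ← ENNReal.rpow_mul,
            mul_one_div_cancel hr0, ENNReal.rpow_one]
    _ ≤ ENNReal.ofReal (8*e1*m*(Real.sqrt (M*C₁)*Real.sqrt sa)) +
        ENNReal.ofReal (Real.sqrt (M*C₁)*Real.sqrt sa) :=
        add_le_add hroot (ENNReal.ofReal_le_ofReal hcbound)
    _ = ENNReal.ofReal ((8 * e1 * m + 1) * (Real.sqrt (M * C₁) * Real.sqrt sa)) := by
        rw [← ENNReal.ofReal_add (by positivity) (by positivity)]
        congr 1
        ring
lemma key_bound {p : ℕ} {Ω : Type} [MeasurableSpace Ω] (μ : Measure Ω) [IsProbabilityMeasure μ]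
    (X0 : Ω → Fin p → ℝ) (hXm : Measurable X0)
    (S : Matrix (Fin p) (Fin p) ℝ)
    (hmap : ∀ u : Fin p → ℝ, Measure.map (fun ω => ∑ i, u i * X0 ω i) μ =
      gaussianReal 0 (Real.toNNReal (∑ i, ∑ j, u i * S i j * u j)))
    {M C₁ : ℝ} (hM : 0 ≤ M) (hC₁ : 0 ≤ C₁)
    (hdiag : ∀ i, S i i ≤ M)
    (hquad : ∀ u : Fin p → ℝ, ∑ i, ∑ j, u i * S i j * u j ≤ C₁ * ∑ i, u i ^ 2)
    (hfrob : ∀ i, ∑ b, (S i b) ^ 2 ≤ M * C₁)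
    (W : Matrix (Fin p) (Fin p) ℝ) (hW : ∑ a, ∑ b, W a b ^ 2 = 1)
    (m : ℕ) (hm : 1 ≤ m) :
    ∫⁻ ω, (ENNReal.ofReal |(∑ a, ∑ b, W a b * X0 ω a * X0 ω b) - ∑ a, ∑ b, W a b * S a b|)
        ^ (((2*m:ℕ)):ℝ) ∂μ
      ≤ ENNReal.ofReal (((8 * Real.exp 1 * m + 1) *
          (Real.sqrt (M*C₁) * Real.sqrt p)) ^ (2*m)) := by
  classical
  set r : ℝ := (((2*m:ℕ)):ℝ) with hr_def
  have hr1 : 1 ≤ r := by rw [hr_def]; exact_mod_cast (by omega : 1 ≤ 2*m)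
  have hrpos : (0:ℝ) < r := by linarith
  have hr0 : r ≠ 0 := ne_of_gt hrpos
  set B : ℝ := (8 * Real.exp 1 * m + 1) * (Real.sqrt (M*C₁) * Real.sqrt p) with hB_def
  have hB0 : 0 ≤ B := by rw [hB_def]; positivity
  have hXa : ∀ a : Fin p, Measurable fun ω => X0 ω a := fun a => (measurable_pi_apply a).comp hXm
  set g : Fin p → Ω → ℝ≥0∞ := fun a ω =>
    ENNReal.ofReal |X0 ω a * (∑ b, W a b * X0 ω b) - (∑ b, W a b * S a b)| with hg_def
  have hgm : ∀ a ∈ (Finset.univ : Finset (Fin p)), Measurable (g a) := fun a _ =>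
    (((hXa a).mul (Finset.measurable_sum _ fun b _ => measurable_const.mul (hXa b))).sub
      measurable_const).abs.ennreal_ofReal
  have hpt : ∀ ω, ENNReal.ofReal |(∑ a, ∑ b, W a b * X0 ω a * X0 ω b) - ∑ a, ∑ b, W a b * S a b|
      ≤ ∑ a, g a ω := by
    intro ω
    have hxi : (∑ a, ∑ b, W a b * X0 ω a * X0 ω b) - ∑ a, ∑ b, W a b * S a b
        = ∑ a, (X0 ω a * (∑ b, W a b * X0 ω b) - (∑ b, W a b * S a b)) := by
      rw [← Finset.sum_sub_distrib]
      refine Finset.sum_congr rfl fun a _ => ?_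
      congr 1
      rw [Finset.mul_sum]
      exact Finset.sum_congr rfl fun b _ => by ring
    rw [hxi]
    refine le_trans (ENNReal.ofReal_le_ofReal (Finset.abs_sum_le_sum_abs _ _)) ?_
    exact le_of_eq (ENNReal.ofReal_sum_of_nonneg (fun a _ => abs_nonneg _))
  have hsq : ∑ a, Real.sqrt (∑ b, W a b ^ 2) ≤ Real.sqrt p := by
    have hcs := Finset.sum_mul_sq_le_sq_mul_sq Finset.univ (fun _ : Fin p => (1:ℝ))
      (fun a => Real.sqrt (∑ b, W a b ^ 2))
    simp only [one_mul, one_pow] at hcs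
    have h2 : ∑ a, Real.sqrt (∑ b, W a b ^ 2) ^ 2 = 1 := by
      rw [← hW]
      exact Finset.sum_congr rfl fun a _ =>
        Real.sq_sqrt (Finset.sum_nonneg fun b _ => sq_nonneg _)
    rw [h2, mul_one] at hcs
    have hcard : ∑ _a : Fin p, (1:ℝ) = p := by simp
    rw [hcard] at hcs
    have hnn : 0 ≤ ∑ a, Real.sqrt (∑ b, W a b ^ 2) :=
      Finset.sum_nonneg fun a _ => Real.sqrt_nonneg _
    rw [← Real.sqrt_sq hnn]
    exact Real.sqrt_le_sqrt hcs
  have main : (∫⁻ ω, (ENNReal.ofReal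
      |(∑ a, ∑ b, W a b * X0 ω a * X0 ω b) - ∑ a, ∑ b, W a b * S a b|) ^ r ∂μ) ^ (1/r)
      ≤ ENNReal.ofReal B := by
    calc (∫⁻ ω, (ENNReal.ofReal
        |(∑ a, ∑ b, W a b * X0 ω a * X0 ω b) - ∑ a, ∑ b, W a b * S a b|) ^ r ∂μ) ^ (1/r)
        ≤ (∫⁻ ω, (∑ a, g a ω) ^ r ∂μ) ^ (1/r) := by
          gcongr with ω
          exact hpt ω
      _ ≤ ∑ a, (∫⁻ ω, g a ω ^ r ∂μ) ^ (1/r) := lp_sum_le Finset.univ g hgm hr1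
      _ ≤ ∑ a : Fin p, ENNReal.ofReal ((8 * Real.exp 1 * m + 1) *
          (Real.sqrt (M*C₁) * Real.sqrt (∑ b, W a b ^ 2))) := by
          refine Finset.sum_le_sum fun a _ => ?_
          exact pera_bound μ X0 hXm S hmap hM hC₁ hdiag hquad hfrob W m hm a
      _ = ENNReal.ofReal (∑ a : Fin p, (8 * Real.exp 1 * m + 1) *
          (Real.sqrt (M*C₁) * Real.sqrt (∑ b, W a b ^ 2))) :=
          (ENNReal.ofReal_sum_of_nonneg (fun a _ => by positivity)).symm
      _ ≤ ENNReal.ofReal B := by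
          apply ENNReal.ofReal_le_ofReal
          rw [hB_def]
          have hfac : ∀ a : Fin p, (8*Real.exp 1*m+1) *
              (Real.sqrt (M*C₁) * Real.sqrt (∑ b, W a b ^ 2)) =
              ((8*Real.exp 1*m+1) * Real.sqrt (M*C₁)) * Real.sqrt (∑ b, W a b ^ 2) :=
            fun a => by ring
          simp_rw [hfac]
          rw [← Finset.mul_sum]
          calc ((8*Real.exp 1*m+1) * Real.sqrt (M*C₁)) * ∑ a, Real.sqrt (∑ b, W a b ^ 2)
              ≤ ((8*Real.exp 1*m+1) * Real.sqrt (M*C₁)) * Real.sqrt p :=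
                mul_le_mul_of_nonneg_left hsq (by positivity)
            _ = (8*Real.exp 1*m+1) * (Real.sqrt (M*C₁) * Real.sqrt p) := by ring
  have hT := ENNReal.rpow_le_rpow main hrpos.le
  rw [← ENNReal.rpow_mul, one_div_mul_cancel hr0, ENNReal.rpow_one] at hT
  refine hT.trans ?_
  rw [ENNReal.ofReal_rpow_of_nonneg hB0 hrpos.le]
  apply le_of_eq
  congr 1
  rw [hr_def, Real.rpow_natCast]

/-- Lemma A.3: for i.i.d. `N_p(0, Σ)` data with `Σ ∈ U_τ(q, c₀, M)`, `Σ̂⁰₁ = X₁X₁ᵀ`, and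
symmetric matrices `V₁, …, V_J` with `‖V_j‖_F = 1` (noting `∑_k γ_{jk} = tr(V_j Σ)`),
`E max_{1≤j≤J} (tr(V_j Σ̂⁰₁) − tr(V_j Σ))² ≤ C(q, c₀, M) (log J)² p` as `J → ∞`. -/
theorem stmt19 (q c0 M : ℝ) (hq0 : 0 ≤ q) (hq1 : q < 1) (hc0 : 0 < c0) (hM : 0 < M) :
    ∃ C > (0 : ℝ), ∃ J₀ : ℕ,
      ∀ (p n J : ℕ) (hn : 0 < n), J₀ ≤ J → 0 < J →
        ∀ (S : Matrix (Fin p) (Fin p) ℝ), S.PosSemidef → memUtau q c0 M S →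
          ∀ (Ω : Type) [MeasurableSpace Ω] (μ : Measure Ω) [IsProbabilityMeasure μ]
            (X : Fin n → Ω → Fin p → ℝ),
            (∀ k, IsGaussianVec μ (X k) 0 S) →
            iIndepFun X μ →
            ∀ (V : Fin J → Matrix (Fin p) (Fin p) ℝ),
              (∀ j, (V j).IsSymm) → (∀ j, ∑ a, ∑ b, (V j a b) ^ 2 = 1) →
              ∫ ω, (⨆ j, (∑ a, ∑ b, V j a b * X ⟨0, hn⟩ ω a * X ⟨0, hn⟩ ω b
                  - ∑ a, ∑ b, V j a b * S a b) ^ 2) ∂μ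
                ≤ C * (Real.log J) ^ 2 * p := by
  classical
  set e1 : ℝ := Real.exp 1 with he1_def
  have he1 : (1:ℝ) ≤ e1 := by
    rw [he1_def]; nlinarith [Real.add_one_le_exp (1:ℝ)]
  refine ⟨324 * e1 ^ 3 * (M * (M ^ (1-q) * c0)), by positivity, 3, ?_⟩
  intro p n J hn hJ3 hJpos S hS hU Ω _ μ _ X hGauss _hindep V _hsymm hnorm
  set C₁ : ℝ := M ^ (1-q) * c0 with hC₁_def
  have hC₁0 : 0 < C₁ := by rw [hC₁_def]; positivity
  -- log and m
  set LJ : ℝ := Real.log J with hLJ_def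
  have hLJ1 : 1 ≤ LJ := by
    rw [hLJ_def]
    have h3 : (3:ℝ) ≤ J := by exact_mod_cast hJ3
    have : (1:ℝ) ≤ Real.log 3 := by
      rw [Real.le_log_iff_exp_le (by norm_num : (0:ℝ) < 3)]
      have := Real.exp_one_lt_d9
      linarith
    calc (1:ℝ) ≤ Real.log 3 := this
      _ ≤ Real.log J := Real.log_le_log (by norm_num) h3
  set m : ℕ := max 2 ⌈LJ⌉₊ with hm_def
  have hm2 : 2 ≤ m := le_max_left _ _
  have hm1 : 1 ≤ m := by omega
  have hm0 : (m:ℝ) ≠ 0 := by positivity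
  have hmlog : (m:ℝ) ≤ 2 * LJ := by
    rw [hm_def]
    push_cast [Nat.cast_max]
    apply max_le
    · linarith
    · have := Nat.ceil_lt_add_one (by linarith : (0:ℝ) ≤ LJ)
      linarith
  have hlogm : LJ ≤ (m:ℝ) := by
    calc LJ ≤ (⌈LJ⌉₊ : ℝ) := Nat.le_ceil _
      _ ≤ (m:ℝ) := by exact_mod_cast le_max_right _ _
  -- the Gaussian data
  have hXm : Measurable (X ⟨0, hn⟩) := (hGauss ⟨0, hn⟩).1
  have hmap : ∀ u : Fin p → ℝ, Measure.map (fun ω => ∑ i, u i * X ⟨0, hn⟩ ω i) μ =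
      gaussianReal 0 (Real.toNNReal (∑ i, ∑ j, u i * S i j * u j)) := by
    intro u
    have h := (hGauss ⟨0, hn⟩).2 u
    simpa using h
  have hdiag := hU.1
  have hquad := quad_bound hq0 hq1 hM hS hU
  have hfrob := frob_row hq0 hq1 hM hS hU
  -- notation
  set X0 : Ω → Fin p → ℝ := X ⟨0, hn⟩ with hX0_def
  set ξ : Fin J → Ω → ℝ := fun j ω =>
    (∑ a, ∑ b, V j a b * X0 ω a * X0 ω b) - ∑ a, ∑ b, V j a b * S a b with hξ_def
  have hξm : ∀ j, Measurable (ξ j) := by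
    intro j
    apply Measurable.sub _ measurable_const
    apply Finset.measurable_sum
    intro a _
    apply Finset.measurable_sum
    intro b _
    exact (measurable_const.mul ((measurable_pi_apply a).comp hXm)).mul
      ((measurable_pi_apply b).comp hXm)
  set r : ℝ := (((2*m:ℕ)):ℝ) with hr_def
  have hrpos : (0:ℝ) < r := by
    rw [hr_def]
    exact_mod_cast (by omega : 0 < 2*m)
  set B : ℝ := (8 * e1 * m + 1) * (Real.sqrt (M*C₁) * Real.sqrt p) with hB_def
  have hB0 : 0 ≤ B := by rw [hB_def]; positivity
  -- the sup function
  set F : Ω → ℝ := fun ω => ⨆ j, (ξ j ω) ^ 2 with hF_def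
  have hFm : Measurable F := Measurable.iSup fun j => (hξm j).pow_const 2
  have j0 : Fin J := ⟨0, hJpos⟩
  haveI : Nonempty (Fin J) := ⟨j0⟩
  have hF0 : ∀ ω, 0 ≤ F ω := by
    intro ω
    calc (0:ℝ) ≤ (ξ j0 ω)^2 := sq_nonneg _
      _ ≤ F ω := le_ciSup (f := fun j => (ξ j ω)^2) (Set.Finite.bddAbove (Set.finite_range _)) j0
  -- pointwise domination
  have hpt : ∀ ω, ENNReal.ofReal (F ω) ≤
      (∑ j, (ENNReal.ofReal |ξ j ω|) ^ r) ^ (1/(m:ℝ)) := by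
    intro ω
    obtain ⟨jm, hjm⟩ := Finite.exists_max fun j => (ξ j ω) ^ 2
    have hFeq : F ω = (ξ jm ω) ^ 2 :=
      le_antisymm (ciSup_le hjm)
        (le_ciSup (f := fun j => (ξ j ω)^2) (Set.Finite.bddAbove (Set.finite_range _)) jm)
    rw [hFeq]
    have h1 : ENNReal.ofReal ((ξ jm ω)^2) = (ENNReal.ofReal |ξ jm ω|) ^ (2:ℕ) := by
      rw [← ENNReal.ofReal_pow (abs_nonneg _), sq_abs]
    rw [h1]
    have h2 : ((ENNReal.ofReal |ξ jm ω|) ^ r) ^ (1/(m:ℝ)) = (ENNReal.ofReal |ξ jm ω|) ^ (2:ℕ) := by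
      rw [← ENNReal.rpow_mul]
      have : r * (1/(m:ℝ)) = ((2:ℕ):ℝ) := by
        rw [hr_def]; push_cast; field_simp
      rw [this, ENNReal.rpow_natCast]
    rw [← h2]
    apply ENNReal.rpow_le_rpow _ (by positivity)
    exact Finset.single_le_sum (f := fun j => (ENNReal.ofReal |ξ j ω|) ^ r)
      (fun j _ => zero_le) (Finset.mem_univ jm)
  -- lintegral bound
  have hgm : ∀ j, Measurable fun ω => (ENNReal.ofReal |ξ j ω|) ^ r :=
    fun j => ((hξm j).abs.ennreal_ofReal).pow_const _
  have hGm : Measurable fun ω => ∑ j, (ENNReal.ofReal |ξ j ω|) ^ r :=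
    Finset.measurable_sum _ fun j _ => hgm j
  have hkey : ∀ j, ∫⁻ ω, (ENNReal.ofReal |ξ j ω|) ^ r ∂μ ≤ ENNReal.ofReal (B ^ (2*m)) := by
    intro j
    rw [hξ_def, hB_def]
    exact key_bound μ X0 hXm S hmap hM.le hC₁0.le hdiag hquad hfrob (V j) (hnorm j) m hm1
  have hL : ∫⁻ ω, ENNReal.ofReal (F ω) ∂μ ≤ ENNReal.ofReal (e1 * B ^ 2) := by
    calc ∫⁻ ω, ENNReal.ofReal (F ω) ∂μ
        ≤ ∫⁻ ω, (∑ j, (ENNReal.ofReal |ξ j ω|) ^ r) ^ (1/(m:ℝ)) ∂μ := lintegral_mono hpt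
      _ ≤ (∫⁻ ω, ∑ j, (ENNReal.ofReal |ξ j ω|) ^ r ∂μ) ^ (1/(m:ℝ)) := by
          apply jensen_rpow _ hGm
          exact_mod_cast hm2
      _ = (∑ j, ∫⁻ ω, (ENNReal.ofReal |ξ j ω|) ^ r ∂μ) ^ (1/(m:ℝ)) := by
          rw [lintegral_finset_sum _ fun j _ => hgm j]
      _ ≤ (∑ _j : Fin J, ENNReal.ofReal (B ^ (2*m))) ^ (1/(m:ℝ)) := by
          apply ENNReal.rpow_le_rpow _ (by positivity)
          exact Finset.sum_le_sum fun j _ => hkey j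
      _ = ((J : ℝ≥0∞) * ENNReal.ofReal (B ^ (2*m))) ^ (1/(m:ℝ)) := by
          rw [Finset.sum_const, Finset.card_univ, Fintype.card_fin, nsmul_eq_mul]
      _ = (J : ℝ≥0∞) ^ (1/(m:ℝ)) * (ENNReal.ofReal (B ^ (2*m))) ^ (1/(m:ℝ)) :=
          ENNReal.mul_rpow_of_nonneg _ _ (by positivity)
      _ ≤ ENNReal.ofReal e1 * ENNReal.ofReal (B ^ 2) := by
          apply mul_le_mul'
          · rw [← ENNReal.ofReal_natCast J, ENNReal.ofReal_rpow_of_nonneg (by positivity)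
              (by positivity)]
            apply ENNReal.ofReal_le_ofReal
            rw [Real.rpow_def_of_pos (by exact_mod_cast hJpos)]
            rw [he1_def, Real.exp_le_exp]
            rw [← hLJ_def]
            calc LJ * (1/(m:ℝ)) ≤ (m:ℝ) * (1/(m:ℝ)) := by
                  apply mul_le_mul_of_nonneg_right hlogm (by positivity)
              _ = 1 := by field_simp
          · rw [ENNReal.ofReal_rpow_of_nonneg (by positivity) (by positivity)]
            apply ENNReal.ofReal_le_ofReal
            apply le_of_eq
            have hroot : ∀ z : ℝ, 0 ≤ z → (z ^ m) ^ (1/(m:ℝ)) = z := fun z hz => by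
              rw [← Real.rpow_natCast z m, ← Real.rpow_mul hz, mul_one_div, div_self hm0,
                Real.rpow_one]
            rw [pow_mul B 2 m, hroot (B^2) (by positivity)]
      _ = ENNReal.ofReal (e1 * B ^ 2) := (ENNReal.ofReal_mul (by positivity)).symm
  -- conclude
  have hae : 0 ≤ᵐ[μ] F := Filter.Eventually.of_forall hF0
  have hfinal : e1 * B ^ 2 ≤ 324 * e1 ^ 3 * (M * C₁) * LJ ^ 2 * p := by
    have hBsq : B ^ 2 = (8 * e1 * m + 1)^2 * ((M*C₁) * p) := by
      rw [hB_def, mul_pow, mul_pow, Real.sq_sqrt (by positivity), Real.sq_sqrt (by positivity)]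
    have hm1' : (1:ℝ) ≤ (m:ℝ) := by exact_mod_cast hm1
    have he1LJ : (1:ℝ) ≤ e1 * LJ := by nlinarith
    have h1 : (8*e1*(m:ℝ)+1) ≤ 18*e1*LJ := by
      nlinarith [mul_le_mul_of_nonneg_left hmlog (by positivity : (0:ℝ) ≤ e1)]
    have h10 : (0:ℝ) ≤ 8*e1*(m:ℝ)+1 := by positivity
    have h2 : (8*e1*(m:ℝ)+1)^2 ≤ 324*e1^2*LJ^2 := by
      calc (8*e1*(m:ℝ)+1)^2 ≤ (18*e1*LJ)^2 := pow_le_pow_left₀ h10 h1 2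
        _ = 324*e1^2*LJ^2 := by ring
    rw [hBsq]
    have hMCp : (0:ℝ) ≤ (M*C₁) * p := by positivity
    calc e1 * ((8*e1*(m:ℝ)+1)^2 * ((M*C₁) * p)) ≤ e1 * ((324*e1^2*LJ^2) * ((M*C₁) * p)) := by
          apply mul_le_mul_of_nonneg_left _ (by positivity)
          exact mul_le_mul_of_nonneg_right h2 hMCp
      _ = 324 * e1 ^ 3 * (M * C₁) * LJ ^ 2 * p := by ring
  have hgoal : ∫ ω, F ω ∂μ ≤ 324 * e1 ^ 3 * (M * C₁) * LJ ^ 2 * p := by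
    rw [MeasureTheory.integral_eq_lintegral_of_nonneg_ae hae hFm.aestronglyMeasurable]
    exact le_trans (ENNReal.toReal_le_of_le_ofReal (by positivity) hL) hfinal
  exact hgoal
end
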